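/- arXiv:0910.4645 — 5 statements merged into one kernel-verified Lean document; each statement's English description precedes it below -/
import Mathlib

section
/- Let n be a positive integer and let A be a nonempty subset of [n] = {1,…,n}. For every real number δ with 1 ≤ δ ≤ (n−1)/|A|, the block structure of A on [n] with respect to δ exists and is unique (i.e., there is exactly one partition of [n] into clockwise-consecutive blocks B₁, G₁, …, B_k, G_k satisfying conditions (i)–(iv)). -/
open Fin.NatCast

/-- The clockwise arc of `l` consecutive points on the circular representation of `[n]`
(modelled as `Fin n`), starting at `s`. -/
def cArc (n : ℕ) [NeZero n] (s : Fin n) (l : ℕ) : Finset (Fin n) :=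
  (Finset.range l).image (fun t : ℕ => s + (t : Fin n))

/-- The interval `[A,B] = {C : A ⊆ C ⊆ B}` in the Boolean lattice of subsets of `[n]`. -/
def fInterval {n : ℕ} (A B : Finset (Fin n)) : Finset (Finset (Fin n)) :=
  B.powerset.filter (fun C => A ⊆ C)

/-- A block structure of `A ⊆ [n]` with respect to the density `δ`: a partition of the
circular representation of `[n]` into clockwise-consecutive blocks
`B₁, G₁, B₂, G₂, …, B_k, G_k` satisfying conditions (i)-(iv). Block `Bᵢ` is the arc of
length `blen i` starting at `bstart i`, and the gap `Gᵢ` is the arc of length `glen i`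
immediately following `Bᵢ`. -/
structure BlockStructure (n : ℕ) [NeZero n] (δ : ℝ) (A : Finset (Fin n)) where
  k : ℕ
  kpos : 0 < k
  bstart : Fin k → Fin n
  blen : Fin k → ℕ
  glen : Fin k → ℕ
  blen_pos : ∀ i, 0 < blen i
  /-- the blocks and gaps are clockwise-consecutive: `B_{i+1}` starts right after `Gᵢ` -/
  consec : ∀ i : Fin k,
    bstart ⟨(i.val + 1) % k, Nat.mod_lt _ kpos⟩ = bstart i + ((blen i + glen i : ℕ) : Fin n)
  /-- (i) the first element of each block lies in `A` -/
  start_mem : ∀ i, bstart i ∈ A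
  /-- (ii) the gaps contain no element of `A` -/
  gap_inter : ∀ i, Disjoint (cArc n (bstart i + (blen i : Fin n)) (glen i)) A
  /-- the blocks and gaps cover `[n]` -/
  cover : ∀ x : Fin n,
    (∃ i, x ∈ cArc n (bstart i) (blen i)) ∨
      (∃ i, x ∈ cArc n (bstart i + (blen i : Fin n)) (glen i))
  /-- distinct blocks are disjoint -/
  block_disj : ∀ i j, i ≠ j →
    Disjoint (cArc n (bstart i) (blen i)) (cArc n (bstart j) (blen j))
  /-- distinct gaps are disjoint -/
  gap_disj : ∀ i j, i ≠ j →
    Disjoint (cArc n (bstart i + (blen i : Fin n)) (glen i))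
      (cArc n (bstart j + (blen j : Fin n)) (glen j))
  /-- blocks are disjoint from gaps -/
  block_gap_disj : ∀ i j,
    Disjoint (cArc n (bstart i) (blen i)) (cArc n (bstart j + (blen j : Fin n)) (glen j))
  /-- (iii) lower density bound: `δ·|A ∩ Bᵢ| − 1 < |Bᵢ|` -/
  density_lb : ∀ i,
    δ * ((A ∩ cArc n (bstart i) (blen i)).card : ℝ) - 1 < ((cArc n (bstart i) (blen i)).card : ℝ)
  /-- (iii) upper density bound: `|Bᵢ| ≤ δ·|A ∩ Bᵢ|` -/
  density_ub : ∀ i,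
    ((cArc n (bstart i) (blen i)).card : ℝ) ≤ δ * ((A ∩ cArc n (bstart i) (blen i)).card : ℝ)
  /-- (iv) every proper initial segment `[bᵢ,y] ⊊ Bᵢ` satisfies `|[bᵢ,y]| + 1 ≤ δ·|[bᵢ,y] ∩ A|` -/
  initial_seg : ∀ i, ∀ t : ℕ, t + 1 < blen i →
    ((cArc n (bstart i) (t + 1)).card : ℝ) + 1 ≤ δ * (((cArc n (bstart i) (t + 1)) ∩ A).card : ℝ)

namespace BlockStructure

variable {n : ℕ} [NeZero n] {δ : ℝ} {A : Finset (Fin n)}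

/-- The block `Bᵢ`. -/
def block (P : BlockStructure n δ A) (i : Fin P.k) : Finset (Fin n) :=
  cArc n (P.bstart i) (P.blen i)

/-- The gap `Gᵢ`. -/
def gap (P : BlockStructure n δ A) (i : Fin P.k) : Finset (Fin n) :=
  cArc n (P.bstart i + (P.blen i : Fin n)) (P.glen i)

/-- `𝒢_δ(A) = G₁ ∪ ⋯ ∪ G_k`, the union of the gaps. -/
def gapsUnion (P : BlockStructure n δ A) : Finset (Fin n) :=
  Finset.univ.biUnion P.gap

/-- `f_δ(A) = A ∪ 𝒢_δ(A)`. -/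
def fset (P : BlockStructure n δ A) : Finset (Fin n) :=
  A ∪ P.gapsUnion

end BlockStructure

/-!
Conditions (iii) and (iv) force the length of a block: a block starting at `a` is the shortest
arc `[a, a + t)` with `δ·|A ∩ [a, a + t)| < t + 1`. These canonical blocks are nested, because a
proper prefix of a canonical block has density surplus at least one, which the rest of the block
inherits. Hence the block starts are forced too: they are the points of `A` lying in the interior
of no canonical block of a point of `A`, and every point of `A` lies in the canonical block of
such a point. Conversely, cutting the circle at these points and splitting each piece into its
canonical block followed by a gap gives a block structure.
-/

section Arc

variable {n : ℕ} [NeZero n]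

theorem mem_cArc {s x : Fin n} {l : ℕ} : x ∈ cArc n s l ↔ ∃ t < l, s + (t : Fin n) = x := by
  simp [cArc]

theorem self_mem_cArc (s : Fin n) {l : ℕ} (hl : 0 < l) : s ∈ cArc n s l :=
  mem_cArc.2 ⟨0, hl, by simp⟩

theorem add_natCast_ne_self (x : Fin n) {u : ℕ} (hu : 0 < u) (hun : u < n) :
    x + (u : Fin n) ≠ x := fun h =>
  hu.ne' <| CharP.natCast_injOn_Iio (Fin n) n hun (NeZero.pos n) (by simpa using h)

theorem cArc_mono (s : Fin n) {l l' : ℕ} (h : l ≤ l') : cArc n s l ⊆ cArc n s l' :=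
  Finset.image_subset_image (Finset.range_subset_range.2 h)

theorem card_cArc (s : Fin n) {l : ℕ} (hl : l ≤ n) : (cArc n s l).card = l := by
  rw [cArc, Finset.card_image_of_injOn, Finset.card_range]
  intro a ha b hb hab
  simp only [Finset.coe_range, Set.mem_Iio] at ha hb
  exact CharP.natCast_injOn_Iio (Fin n) n (ha.trans_le hl) (hb.trans_le hl) (add_left_cancel hab)

theorem cArc_eq_univ (s : Fin n) {l : ℕ} (hl : n ≤ l) : cArc n s l = Finset.univ :=
  Finset.eq_univ_of_forall fun x => mem_cArc.2 ⟨(x - s).val, (x - s).isLt.trans_le hl, by simp⟩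

theorem cArc_add (s : Fin n) (u v : ℕ) :
    cArc n s (u + v) = cArc n s u ∪ cArc n (s + (u : Fin n)) v := by
  ext x
  simp only [Finset.mem_union, mem_cArc, add_assoc, ← Nat.cast_add]
  constructor
  · rintro ⟨t, ht, rfl⟩
    rcases lt_or_ge t u with h | h
    · exact Or.inl ⟨t, h, rfl⟩
    · exact Or.inr ⟨t - u, by omega, by rw [Nat.add_sub_cancel' h]⟩
  · rintro (⟨t, ht, rfl⟩ | ⟨t, ht, rfl⟩)
    · exact ⟨t, by omega, rfl⟩
    · exact ⟨u + t, by omega, rfl⟩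

theorem disjoint_cArc_cArc_add (s : Fin n) {u v : ℕ} (h : u + v ≤ n) :
    Disjoint (cArc n s u) (cArc n (s + (u : Fin n)) v) := by
  rw [Finset.disjoint_left]
  intro x hx hx'
  obtain ⟨a, ha, rfl⟩ := mem_cArc.1 hx
  obtain ⟨b, hb, hab⟩ := mem_cArc.1 hx'
  rw [add_assoc, ← Nat.cast_add] at hab
  have := CharP.natCast_injOn_Iio (Fin n) n (by simp; omega) (by simp; omega) (add_left_cancel hab)
  omega

end Arc

section NextDist

variable {n : ℕ} [NeZero n] {S : Finset (Fin n)} {m : Fin n}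

noncomputable def nextDist (S : Finset (Fin n)) (m : Fin n) : ℕ :=
  sInf {u | 0 < u ∧ m + (u : Fin n) ∈ S}

theorem nextDist_le {u : ℕ} (hu : 0 < u) (hS : m + (u : Fin n) ∈ S) : nextDist S m ≤ u :=
  Nat.sInf_le (show u ∈ {v : ℕ | 0 < v ∧ m + (v : Fin n) ∈ S} from ⟨hu, hS⟩)

theorem nextDist_spec {u : ℕ} (hu : 0 < u) (hS : m + (u : Fin n) ∈ S) :
    0 < nextDist S m ∧ m + (nextDist S m : Fin n) ∈ S :=
  Nat.sInf_mem (s := {v : ℕ | 0 < v ∧ m + (v : Fin n) ∈ S}) ⟨u, hu, hS⟩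

theorem nextDist_spec_of_mem (hm : m ∈ S) :
    0 < nextDist S m ∧ m + (nextDist S m : Fin n) ∈ S :=
  nextDist_spec (NeZero.pos n) (by simpa using hm)

theorem nextDist_le_of_mem (hm : m ∈ S) : nextDist S m ≤ n :=
  nextDist_le (NeZero.pos n) (by simpa using hm)

theorem add_notMem_of_lt_nextDist {v : ℕ} (hv : 0 < v) (h : v < nextDist S m) :
    m + (v : Fin n) ∉ S := fun hS =>
  Nat.notMem_of_lt_sInf h ⟨hv, hS⟩

theorem nextDist_eq {u : ℕ} (hu : 0 < u) (hS : m + (u : Fin n) ∈ S)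
    (hmin : ∀ v, 0 < v → v < u → m + (v : Fin n) ∉ S) : nextDist S m = u := by
  have hmem := nextDist_spec hu hS
  exact le_antisymm (nextDist_le hu hS) (not_lt.1 fun hlt => hmin _ hmem.1 hlt hmem.2)

theorem disjoint_cArc_nextDist {m' : Fin n} (hm : m ∈ S) (hm' : m' ∈ S) (hne : m ≠ m') :
    Disjoint (cArc n m (nextDist S m)) (cArc n m' (nextDist S m')) := by
  -- if `m + u = m' + u'` with `u ≤ u'`, then `m = m' + (u' - u)` lies in `S` too early
  suffices key : ∀ {m m' : Fin n} {u u' : ℕ}, m ∈ S → u ≤ u' → u' < nextDist S m' →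
      m + (u : Fin n) = m' + (u' : Fin n) → m = m' by
    rw [Finset.disjoint_left]
    intro x hx hx'
    obtain ⟨u, hu, rfl⟩ := mem_cArc.1 hx
    obtain ⟨u', hu', hx⟩ := mem_cArc.1 hx'
    rcases le_total u u' with h | h
    · exact hne (key hm h hu' hx.symm)
    · exact hne (key hm' h hu hx).symm
  intro m m' u u' hm hle hu' h
  have hm_eq : m' + ((u' - u : ℕ) : Fin n) = m := by
    rw [← add_left_inj (u : Fin n), add_assoc, ← Nat.cast_add, Nat.sub_add_cancel hle, h]
  rcases Nat.eq_zero_or_pos (u' - u) with h0 | h0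
  · simpa [h0] using hm_eq.symm
  · exact absurd (hm_eq ▸ hm) (add_notMem_of_lt_nextDist h0 (by omega))

theorem exists_mem_cArc_nextDist (hS : S.Nonempty) (x : Fin n) :
    ∃ m ∈ S, x ∈ cArc n m (nextDist S m) := by
  classical
  -- take for `m` the nearest point of `S` counterclockwise from `x`
  have hex : ∃ u : ℕ, x - (u : Fin n) ∈ S := by
    obtain ⟨s, hs⟩ := hS
    exact ⟨(x - s).val, by simpa using hs⟩
  refine ⟨x - (Nat.find hex : Fin n), Nat.find_spec hex, mem_cArc.2 ⟨Nat.find hex, ?_, by simp⟩⟩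
  set u := Nat.find hex
  set d := nextDist S (x - (u : Fin n))
  by_contra! hle
  obtain ⟨hpos, hnext⟩ := nextDist_spec_of_mem (m := x - (u : Fin n)) (Nat.find_spec hex)
  have hcast : ((u - d : ℕ) : Fin n) + (d : Fin n) = u := by
    rw [← Nat.cast_add, Nat.sub_add_cancel hle]
  refine Nat.find_min hex (m := u - d) (by omega) ?_
  rw [eq_sub_of_add_eq hcast]
  convert hnext using 1
  abel

theorem nextDist_add_natCast_eq (a : Fin n) {p N : ℕ} (hpN : p < N) (hN : a + (N : Fin n) ∈ S)
    (hgap : ∀ q, p < q → q < N → a + (q : Fin n) ∉ S) :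
    nextDist S (a + (p : Fin n)) = N - p := by
  refine nextDist_eq (by omega) ?_ fun v hv0 hv => ?_
  · rwa [add_assoc, ← Nat.cast_add, Nat.add_sub_cancel' hpN.le]
  · rw [add_assoc, ← Nat.cast_add]
    exact hgap _ (by omega) (by omega)

theorem exists_sorted_offsets {a : Fin n} (ha : a ∈ S) :
    ∃ (k : ℕ) (hk : 0 < k) (e : Fin k ↪o ℕ), e ⟨0, hk⟩ = 0 ∧ (∀ i, e i < n) ∧
      ∀ q < n, a + (q : Fin n) ∈ S ↔ ∃ l, e l = q := by
  set P : Finset ℕ := S.image fun x => (x - a).val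
  have h0P : 0 ∈ P := Finset.mem_image.2 ⟨a, ha, by simp⟩
  have hk : 0 < P.card := Finset.card_pos.2 ⟨0, h0P⟩
  refine ⟨P.card, hk, P.orderEmbOfFin rfl, ?_, fun i => ?_, fun q hq => ?_⟩
  · rw [Finset.orderEmbOfFin_zero rfl hk]
    exact Nat.eq_zero_of_le_zero (P.min'_le 0 h0P)
  · obtain ⟨x, -, hx⟩ := Finset.mem_image.1 (P.orderEmbOfFin_mem rfl i)
    exact hx ▸ (x - a).isLt
  · rw [← Set.mem_range, Finset.range_orderEmbOfFin, Finset.mem_coe, Finset.mem_image]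
    constructor
    · exact fun h => ⟨_, h, by simp [Fin.val_cast_of_lt hq]⟩
    · rintro ⟨x, hx, rfl⟩
      simpa using hx

theorem exists_cyclic_enumeration (hS : S.Nonempty) :
    ∃ (k : ℕ) (hk : 0 < k) (b : Fin k → Fin n), Function.Injective b ∧ Set.range b = S ∧
      ∀ i : Fin k, b ⟨(i.val + 1) % k, Nat.mod_lt _ hk⟩ = b i + (nextDist S (b i) : Fin n) := by
  obtain ⟨a, ha⟩ := hS
  obtain ⟨k, hk, e, he0, he_lt, hoffset⟩ := exists_sorted_offsets ha
  set b : Fin k → Fin n := fun i => a + (e i : Fin n)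
  have hmem : ∀ i, b i ∈ S := fun i => (hoffset _ (he_lt i)).2 ⟨i, rfl⟩
  have hstep : ∀ i j (N : ℕ), e i < N → N ≤ n → (N : Fin n) = e j →
      (∀ l, e i < e l → N ≤ e l) → b j = b i + (nextDist S (b i) : Fin n) := by
    intro i j N hiN hN hNj hgap
    rw [nextDist_add_natCast_eq a hiN (by rw [hNj]; exact hmem j) fun q hq hqN hqS => ?_,
      add_assoc, ← Nat.cast_add, Nat.add_sub_cancel' hiN.le, hNj]
    obtain ⟨l, rfl⟩ := (hoffset q (by omega)).1 hqS
    exact (hgap l hq).not_gt hqN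
  refine ⟨k, hk, b, fun i j hij => e.injective ?_, ?_, fun i => ?_⟩
  · exact CharP.natCast_injOn_Iio (Fin n) n (he_lt i) (he_lt j) (add_left_cancel hij)
  · refine Set.Subset.antisymm (Set.range_subset_iff.2 hmem) fun x hx => ?_
    obtain ⟨l, hl⟩ := (hoffset _ (x - a).isLt).1 (by simpa using hx)
    exact ⟨l, by simp [b, hl]⟩
  by_cases hi : i.val + 1 < k
  · have hnext : (⟨(i.val + 1) % k, Nat.mod_lt _ hk⟩ : Fin k) = ⟨i.val + 1, hi⟩ :=
      Fin.ext (Nat.mod_eq_of_lt hi)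
    rw [hnext]
    refine hstep i _ _ (e.strictMono (by simp [Fin.lt_def])) (he_lt _).le rfl
      fun l hl => e.monotone (Fin.mk_le_mk.2 ?_)
    have := e.lt_iff_lt.1 hl
    rw [Fin.lt_def] at this
    omega
  · have hnext : (⟨(i.val + 1) % k, Nat.mod_lt _ hk⟩ : Fin k) = ⟨0, hk⟩ :=
      Fin.ext (by simp [show i.val + 1 = k by omega])
    rw [hnext]
    refine hstep i _ n (he_lt i) le_rfl (by simp [he0]) fun l hl => absurd (e.lt_iff_lt.1 hl) ?_
    rw [Fin.lt_def]
    omega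

end NextDist

section Density

variable {n : ℕ} [NeZero n] {δ : ℝ} {A : Finset (Fin n)} {a : Fin n}

def arcCount (A : Finset (Fin n)) (s : Fin n) (l : ℕ) : ℕ :=
  (A ∩ cArc n s l).card

theorem arcCount_mono (A : Finset (Fin n)) (s : Fin n) {l l' : ℕ} (h : l ≤ l') :
    arcCount A s l ≤ arcCount A s l' :=
  Finset.card_le_card (Finset.inter_subset_inter_left (cArc_mono s h))

theorem arcCount_of_le (A : Finset (Fin n)) (s : Fin n) {l : ℕ} (h : n ≤ l) :
    arcCount A s l = A.card := by
  rw [arcCount, cArc_eq_univ s h, Finset.inter_univ]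

theorem arcCount_add (A : Finset (Fin n)) (s : Fin n) {u v : ℕ} (h : u + v ≤ n) :
    arcCount A s (u + v) = arcCount A s u + arcCount A (s + (u : Fin n)) v := by
  rw [arcCount, cArc_add, Finset.inter_union_distrib_left]
  exact Finset.card_union_of_disjoint
    ((disjoint_cArc_cArc_add s h).mono Finset.inter_subset_right Finset.inter_subset_right)

theorem one_le_arcCount (ha : a ∈ A) {l : ℕ} (hl : 0 < l) : 1 ≤ arcCount A a l :=
  Finset.card_pos.2 ⟨a, Finset.mem_inter.2 ⟨ha, self_mem_cArc a hl⟩⟩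

noncomputable def blockLen (δ : ℝ) (A : Finset (Fin n)) (a : Fin n) : ℕ :=
  sInf {t : ℕ | 0 < t ∧ δ * arcCount A a t < t + 1}

theorem blockLen_spec (hδA : δ * A.card ≤ n - 1) (a : Fin n) :
    0 < blockLen δ A a ∧ δ * arcCount A a (blockLen δ A a) < blockLen δ A a + 1 :=
  Nat.sInf_mem (s := {t : ℕ | 0 < t ∧ δ * arcCount A a t < t + 1})
    ⟨n, NeZero.pos n, by rw [arcCount_of_le A a le_rfl]; linarith⟩

theorem blockLen_le (hδA : δ * A.card ≤ n - 1) (a : Fin n) : blockLen δ A a ≤ n :=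
  Nat.sInf_le (show n ∈ {t : ℕ | 0 < t ∧ δ * arcCount A a t < t + 1} from
    ⟨NeZero.pos n, by rw [arcCount_of_le A a le_rfl]; linarith⟩)

theorem add_one_le_mul_arcCount {t : ℕ} (ht : 0 < t) (h : t < blockLen δ A a) :
    (t : ℝ) + 1 ≤ δ * arcCount A a t :=
  not_lt.1 fun hlt => Nat.notMem_of_lt_sInf h ⟨ht, hlt⟩

theorem blockLen_eq {b : ℕ} (hb : 0 < b) (hlt : δ * arcCount A a b < b + 1)
    (hle : ∀ t, 0 < t → t < b → (t : ℝ) + 1 ≤ δ * arcCount A a t) : blockLen δ A a = b := by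
  have hmem : 0 < blockLen δ A a ∧ δ * arcCount A a (blockLen δ A a) < blockLen δ A a + 1 :=
    Nat.sInf_mem (s := {t : ℕ | 0 < t ∧ δ * arcCount A a t < t + 1}) ⟨b, hb, hlt⟩
  refine le_antisymm (Nat.sInf_le ⟨hb, hlt⟩) (not_lt.1 fun h => ?_)
  exact (hle _ hmem.1 h).not_gt hmem.2

theorem blockLen_le_mul_arcCount (hδ1 : 1 ≤ δ) (hδA : δ * A.card ≤ n - 1) (ha : a ∈ A) :
    (blockLen δ A a : ℝ) ≤ δ * arcCount A a (blockLen δ A a) := by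
  obtain ⟨t, ht⟩ := Nat.exists_eq_add_one_of_ne_zero (blockLen_spec hδA a).1.ne'
  rw [ht]
  rcases Nat.eq_zero_or_pos t with rfl | ht0
  · have : (1 : ℝ) ≤ arcCount A a (0 + 1) := by exact_mod_cast one_le_arcCount ha one_pos
    push_cast
    nlinarith
  · calc ((t + 1 : ℕ) : ℝ) = t + 1 := by push_cast; ring
      _ ≤ δ * arcCount A a t := add_one_le_mul_arcCount ht0 (by omega)
      _ ≤ δ * arcCount A a (t + 1) := by
        gcongr
        exact arcCount_mono A a t.le_succ

theorem add_blockLen_le (hδA : δ * A.card ≤ n - 1) {s : ℕ} (hs0 : 0 < s)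
    (hs : s < blockLen δ A a) : s + blockLen δ A (a + (s : Fin n)) ≤ blockLen δ A a := by
  by_contra! h
  set L := blockLen δ A a
  have hsplit := arcCount_add A a (u := s) (v := L - s) (by have := blockLen_le hδA a; omega)
  rw [Nat.add_sub_cancel' hs.le] at hsplit
  have hprefix := add_one_le_mul_arcCount hs0 hs
  have hsuffix := add_one_le_mul_arcCount (δ := δ) (A := A) (a := a + (s : Fin n)) (t := L - s) (by omega)
    (by omega)
  have hL := (blockLen_spec hδA a).2
  rw [hsplit, Nat.cast_add, mul_add] at hL
  rw [Nat.cast_sub hs.le] at hsuffix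
  linarith

theorem add_lt_blockLen (hδA : δ * A.card ≤ n - 1) {s t : ℕ} (hs : s < blockLen δ A a)
    (ht : t < blockLen δ A (a + (s : Fin n))) : s + t < blockLen δ A a := by
  rcases Nat.eq_zero_or_pos s with rfl | hs0
  · simpa using ht
  · have := add_blockLen_le hδA hs0 hs
    omega

open Classical in
noncomputable def blockStarts (δ : ℝ) (A : Finset (Fin n)) : Finset (Fin n) :=
  {m ∈ A | ∀ a ∈ A, ∀ s : ℕ, 0 < s → s < blockLen δ A a → a + (s : Fin n) ≠ m}

theorem mem_blockStarts {m : Fin n} : m ∈ blockStarts δ A ↔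
    m ∈ A ∧ ∀ a ∈ A, ∀ s : ℕ, 0 < s → s < blockLen δ A a → a + (s : Fin n) ≠ m := by
  simp [blockStarts]

theorem blockStarts_subset : blockStarts δ A ⊆ A := fun _ hm => (mem_blockStarts.1 hm).1

theorem exists_mem_blockStarts_add_eq (hδA : δ * A.card ≤ n - 1) {x : Fin n} (hx : x ∈ A) :
    ∃ m ∈ blockStarts δ A, ∃ s < blockLen δ A m, m + (s : Fin n) = x := by
  classical
  -- among the canonical blocks containing `x`, a longest one starts at a block start
  let T := {m ∈ A | ∃ s < blockLen δ A m, m + (s : Fin n) = x}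
  have hxT : x ∈ T := Finset.mem_filter.2 ⟨hx, 0, (blockLen_spec hδA x).1, by simp⟩
  obtain ⟨m, hmT, hmax⟩ := T.exists_max_image (blockLen δ A) ⟨x, hxT⟩
  obtain ⟨hmA, s, hs, rfl⟩ := Finset.mem_filter.1 hmT
  refine ⟨m, mem_blockStarts.2 ⟨hmA, fun a ha r hr0 hr hram => ?_⟩, s, hs, rfl⟩
  subst hram
  have hnest := add_blockLen_le hδA hr0 hr
  have haT : a ∈ T := Finset.mem_filter.2
    ⟨ha, r + s, add_lt_blockLen hδA hr hs, by rw [Nat.cast_add, add_assoc]⟩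
  have := hmax a haT
  omega

theorem blockLen_le_nextDist {m : Fin n} (hm : m ∈ blockStarts δ A) :
    blockLen δ A m ≤ nextDist (blockStarts δ A) m := by
  obtain ⟨hpos, hnext⟩ := nextDist_spec_of_mem hm
  exact not_lt.1 fun h =>
    (mem_blockStarts.1 hnext).2 m (blockStarts_subset hm) _ hpos h rfl

end Density

section Canonical

variable {n : ℕ} [NeZero n] {δ : ℝ} {A : Finset (Fin n)} {m m' : Fin n}

theorem blockStarts_nonempty (hA : A.Nonempty) (hδA : δ * A.card ≤ n - 1) :
    (blockStarts δ A).Nonempty := by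
  obtain ⟨a, ha⟩ := hA
  obtain ⟨m, hm, -⟩ := exists_mem_blockStarts_add_eq hδA ha
  exact ⟨m, hm⟩

noncomputable def canonicalBlock (δ : ℝ) (A : Finset (Fin n)) (m : Fin n) : Finset (Fin n) :=
  cArc n m (blockLen δ A m)

noncomputable def canonicalGap (δ : ℝ) (A : Finset (Fin n)) (m : Fin n) : Finset (Fin n) :=
  cArc n (m + (blockLen δ A m : Fin n)) (nextDist (blockStarts δ A) m - blockLen δ A m)

theorem cArc_nextDist_eq_union (hm : m ∈ blockStarts δ A) :
    cArc n m (nextDist (blockStarts δ A) m) = canonicalBlock δ A m ∪ canonicalGap δ A m := by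
  rw [canonicalBlock, canonicalGap, ← cArc_add, Nat.add_sub_cancel' (blockLen_le_nextDist hm)]

theorem canonicalBlock_subset (hm : m ∈ blockStarts δ A) :
    canonicalBlock δ A m ⊆ cArc n m (nextDist (blockStarts δ A) m) := by
  rw [cArc_nextDist_eq_union hm]
  exact Finset.subset_union_left

theorem canonicalGap_subset (hm : m ∈ blockStarts δ A) :
    canonicalGap δ A m ⊆ cArc n m (nextDist (blockStarts δ A) m) := by
  rw [cArc_nextDist_eq_union hm]
  exact Finset.subset_union_right

theorem disjoint_canonicalBlock_canonicalGap (hm : m ∈ blockStarts δ A)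
    (hm' : m' ∈ blockStarts δ A) : Disjoint (canonicalBlock δ A m) (canonicalGap δ A m') := by
  rcases eq_or_ne m m' with rfl | hne
  · refine disjoint_cArc_cArc_add _ ?_
    rw [Nat.add_sub_cancel' (blockLen_le_nextDist hm)]
    exact nextDist_le_of_mem hm
  · exact (disjoint_cArc_nextDist hm hm' hne).mono (canonicalBlock_subset hm)
      (canonicalGap_subset hm')

theorem disjoint_canonicalGap (hδA : δ * A.card ≤ n - 1) (hm : m ∈ blockStarts δ A) :
    Disjoint (canonicalGap δ A m) A := by
  rw [Finset.disjoint_right]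
  intro x hxA hxg
  obtain ⟨m', hm', s, hs, rfl⟩ := exists_mem_blockStarts_add_eq hδA hxA
  exact Finset.disjoint_left.1 (disjoint_canonicalBlock_canonicalGap hm' hm)
    (mem_cArc.2 ⟨s, hs, rfl⟩) hxg

theorem exists_mem_canonicalBlock_or_canonicalGap (hS : (blockStarts δ A).Nonempty)
    (x : Fin n) :
    ∃ m ∈ blockStarts δ A, x ∈ canonicalBlock δ A m ∨ x ∈ canonicalGap δ A m := by
  obtain ⟨m, hm, hx⟩ := exists_mem_cArc_nextDist hS x
  exact ⟨m, hm, Finset.mem_union.1 (cArc_nextDist_eq_union hm ▸ hx)⟩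

theorem nonempty_blockStructure (hA : A.Nonempty) (hδ1 : 1 ≤ δ)
    (hδA : δ * A.card ≤ n - 1) : Nonempty (BlockStructure n δ A) := by
  have hS := blockStarts_nonempty hA hδA
  obtain ⟨k, hk, b, hb_inj, hb_range, hb_succ⟩ := exists_cyclic_enumeration hS
  have hbS : ∀ i, b i ∈ blockStarts δ A := fun i =>
    Finset.mem_coe.1 (hb_range ▸ Set.mem_range_self i)
  have hcell_disj : ∀ i j, i ≠ j →
      Disjoint (cArc n (b i) (nextDist _ (b i))) (cArc n (b j) (nextDist _ (b j))) :=
    fun i j hij => disjoint_cArc_nextDist (hbS i) (hbS j) (hb_inj.ne hij)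
  exact ⟨{
    k := k, kpos := hk, bstart := b, blen := fun i => blockLen δ A (b i)
    glen := fun i => nextDist (blockStarts δ A) (b i) - blockLen δ A (b i)
    blen_pos := fun i => (blockLen_spec hδA _).1
    consec := fun i => by
      rw [Nat.add_sub_cancel' (blockLen_le_nextDist (hbS i))]
      exact hb_succ i
    start_mem := fun i => blockStarts_subset (hbS i)
    gap_inter := fun i => disjoint_canonicalGap hδA (hbS i)
    cover := fun x => by
      obtain ⟨m, hm, hx⟩ := exists_mem_canonicalBlock_or_canonicalGap hS x
      obtain ⟨i, rfl⟩ : m ∈ Set.range b := by rw [hb_range]; exact hm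
      exact hx.imp (⟨i, ·⟩) (⟨i, ·⟩)
    block_disj := fun i j hij => (hcell_disj i j hij).mono (canonicalBlock_subset (hbS i))
      (canonicalBlock_subset (hbS j))
    gap_disj := fun i j hij => (hcell_disj i j hij).mono (canonicalGap_subset (hbS i))
      (canonicalGap_subset (hbS j))
    block_gap_disj := fun i j => disjoint_canonicalBlock_canonicalGap (hbS i) (hbS j)
    density_lb := fun i => by
      have := (blockLen_spec hδA (b i)).2
      rw [arcCount] at this
      rw [card_cArc _ (blockLen_le hδA _)]
      linarith
    density_ub := fun i => by
      rw [card_cArc _ (blockLen_le hδA _)]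
      exact blockLen_le_mul_arcCount hδ1 hδA (blockStarts_subset (hbS i))
    initial_seg := fun i t ht => by
      rw [card_cArc _ (by have := blockLen_le hδA (b i); omega), Finset.inter_comm]
      exact add_one_le_mul_arcCount t.succ_pos ht }⟩

end Canonical

namespace BlockStructure

variable {n : ℕ} [NeZero n] {δ : ℝ} {A : Finset (Fin n)} (P : BlockStructure n δ A)

theorem blen_lt (hδA : δ * A.card ≤ n - 1) (i : Fin P.k) : P.blen i < n := by
  by_contra! h
  have hub := P.density_ub i
  rw [cArc_eq_univ _ h, Finset.inter_univ, Finset.card_univ, Fintype.card_fin] at hub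
  linarith

theorem card_block (hδA : δ * A.card ≤ n - 1) (i : Fin P.k) :
    (cArc n (P.bstart i) (P.blen i)).card = P.blen i :=
  card_cArc _ (P.blen_lt hδA i).le

theorem blen_eq_blockLen (hδA : δ * A.card ≤ n - 1) (i : Fin P.k) :
    P.blen i = blockLen δ A (P.bstart i) := by
  refine (blockLen_eq (P.blen_pos i) ?_ fun t ht hti => ?_).symm
  · have := P.density_lb i
    rw [P.card_block hδA i] at this
    rw [arcCount]
    linarith
  · obtain ⟨s, rfl⟩ := Nat.exists_eq_add_one_of_ne_zero ht.ne'
    have := P.initial_seg i s hti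
    rwa [card_cArc _ (by have := P.blen_lt hδA i; omega), Finset.inter_comm] at this

theorem exists_bstart_add_eq {a : Fin n} (ha : a ∈ A) :
    ∃ j, ∃ s < P.blen j, P.bstart j + (s : Fin n) = a := by
  rcases P.cover a with ⟨j, hj⟩ | ⟨j, hj⟩
  · exact ⟨j, mem_cArc.1 hj⟩
  · exact absurd ha (Finset.disjoint_left.1 (P.gap_inter j) hj)

theorem eq_of_bstart_add_eq (hδA : δ * A.card ≤ n - 1) {i j : Fin P.k} {u : ℕ}
    (hu : u < P.blen i) (h : P.bstart i + (u : Fin n) = P.bstart j) : j = i ∧ u = 0 := by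
  obtain rfl : j = i := by
    by_contra hji
    exact Finset.disjoint_left.1 (P.block_disj i j (Ne.symm hji)) (mem_cArc.2 ⟨u, hu, h⟩)
      (self_mem_cArc _ (P.blen_pos j))
  refine ⟨rfl, by_contra fun hu0 => ?_⟩
  exact add_natCast_ne_self _ (Nat.pos_of_ne_zero hu0) (hu.trans (P.blen_lt hδA j)) h

theorem bstart_mem_blockStarts (hδA : δ * A.card ≤ n - 1) (i : Fin P.k) :
    P.bstart i ∈ blockStarts δ A := by
  refine mem_blockStarts.2 ⟨P.start_mem i, fun a ha s hs0 hs h => ?_⟩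
  obtain ⟨j, r, hr, rfl⟩ := P.exists_bstart_add_eq ha
  rw [P.blen_eq_blockLen hδA] at hr
  have hlt : r + s < P.blen j := by
    rw [P.blen_eq_blockLen hδA]
    exact add_lt_blockLen hδA hr hs
  have := P.eq_of_bstart_add_eq hδA hlt (by rw [Nat.cast_add, ← add_assoc, h])
  omega

theorem exists_bstart_eq (hδA : δ * A.card ≤ n - 1) {m : Fin n} (hm : m ∈ blockStarts δ A) :
    ∃ i, P.bstart i = m := by
  obtain ⟨hmA, hm_max⟩ := mem_blockStarts.1 hm
  obtain ⟨j, s, hs, rfl⟩ := P.exists_bstart_add_eq hmA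
  rcases Nat.eq_zero_or_pos s with rfl | hs0
  · exact ⟨j, by simp⟩
  · exact absurd rfl (hm_max _ (P.start_mem j) s hs0 (P.blen_eq_blockLen hδA j ▸ hs))

theorem range_bstart (hδA : δ * A.card ≤ n - 1) :
    Set.range P.bstart = blockStarts δ A := by
  refine Set.Subset.antisymm ?_ fun m hm => P.exists_bstart_eq hδA hm
  rintro _ ⟨i, rfl⟩
  exact P.bstart_mem_blockStarts hδA i

theorem glen_lt (hA : A.Nonempty) (i : Fin P.k) : P.glen i < n := by
  by_contra! h
  obtain ⟨a, ha⟩ := hA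
  have hgap := P.gap_inter i
  rw [cArc_eq_univ _ h] at hgap
  exact Finset.disjoint_left.1 hgap (Finset.mem_univ a) ha

theorem blen_add_glen_le (hA : A.Nonempty) (hδA : δ * A.card ≤ n - 1) (i : Fin P.k) :
    P.blen i + P.glen i ≤ n := by
  have := Finset.card_le_univ
    (cArc n (P.bstart i) (P.blen i) ∪ cArc n (P.bstart i + (P.blen i : Fin n)) (P.glen i))
  rwa [Finset.card_union_of_disjoint (P.block_gap_disj i i), P.card_block hδA,
    card_cArc _ (P.glen_lt hA i).le, Fintype.card_fin] at this

theorem blen_add_glen (hA : A.Nonempty) (hδA : δ * A.card ≤ n - 1) (i : Fin P.k) :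
    P.blen i + P.glen i = nextDist (blockStarts δ A) (P.bstart i) := by
  have hpos : 0 < P.blen i + P.glen i := by have := P.blen_pos i; omega
  have hnext : P.bstart i + ((P.blen i + P.glen i : ℕ) : Fin n) ∈ blockStarts δ A := by
    rw [← P.consec i]
    exact P.bstart_mem_blockStarts hδA _
  refine (nextDist_eq hpos hnext fun v hv0 hv hvS => ?_).symm
  obtain ⟨j, hj⟩ := P.exists_bstart_eq hδA hvS
  have hx : P.bstart j ∈ cArc n (P.bstart i) (P.blen i + P.glen i) := mem_cArc.2 ⟨v, hv, hj.symm⟩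
  rw [cArc_add] at hx
  rcases Finset.mem_union.1 hx with hb | hg
  · obtain ⟨u, hu, hu'⟩ := mem_cArc.1 hb
    obtain ⟨rfl, -⟩ := P.eq_of_bstart_add_eq hδA hu hu'
    refine add_natCast_ne_self _ hv0 ?_ hj.symm
    have := P.blen_add_glen_le hA hδA j
    omega
  · exact Finset.disjoint_left.1 (P.gap_inter i) hg (P.start_mem j)

theorem range_block (hδA : δ * A.card ≤ n - 1) :
    Set.range P.block = canonicalBlock δ A '' blockStarts δ A := by
  rw [← P.range_bstart hδA, ← Set.range_comp]
  congr 1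
  funext i
  rw [Function.comp_apply, block, canonicalBlock, P.blen_eq_blockLen hδA]

theorem range_gap (hA : A.Nonempty) (hδA : δ * A.card ≤ n - 1) :
    Set.range P.gap = canonicalGap δ A '' blockStarts δ A := by
  rw [← P.range_bstart hδA, ← Set.range_comp]
  congr 1
  funext i
  have := P.blen_add_glen hA hδA i
  rw [Function.comp_apply, gap, canonicalGap, ← P.blen_eq_blockLen hδA]
  congr 1
  omega

end BlockStructure

/-- For a positive integer `n`, a nonempty `A ⊆ [n]`, and a real density
`δ` with `1 ≤ δ ≤ (n−1)/|A|`, the block structure of `A` on `[n]` with respect to `δ`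
exists and is unique (unique as a partition: any two block structures have the same set of
blocks and the same set of gaps). -/
theorem block_structure_exists_and_unique (n : ℕ) [NeZero n] (A : Finset (Fin n))
    (hA : A.Nonempty) (δ : ℝ) (hδ1 : 1 ≤ δ) (hδ2 : δ ≤ ((n : ℝ) - 1) / A.card) :
    Nonempty (BlockStructure n δ A) ∧
      ∀ P Q : BlockStructure n δ A,
        Set.range P.block = Set.range Q.block ∧ Set.range P.gap = Set.range Q.gap := by
  have hδA : δ * A.card ≤ n - 1 := (le_div_iff₀ (by exact_mod_cast hA.card_pos)).1 hδ2
  refine ⟨nonempty_blockStructure hA hδ1 hδA, fun P Q => ⟨?_, ?_⟩⟩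
  · rw [P.range_block hδA, Q.range_block hδA]
  · rw [P.range_gap hA hδA, Q.range_gap hA hδA]
end

section
/- Let d ≥ 1 be an integer and let n = 2d+1. Then there exists a partition of the family of all subsets of [n] of cardinality at least d into intervals [A,B] such that |B| ≥ d+1 for every interval in the partition. (In particular, there is an injection from the d-subsets of [n] to the (d+1)-subsets of [n] sending each d-set A to a (d+1)-set containing A.) -/
/-!
In the Boolean lattice of a set of size `2k + 1`, every `k`-set has `k + 1` supersets of size
`k + 1` and every `(k + 1)`-set has `k + 1` subsets of size `k`. Double counting (the upward local
LYM inequality) gives Hall's condition, so there is an injection `φ` sending each `k`-set `A` to a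
`(k + 1)`-set containing it. The intervals `[A, φ A]` for `|A| = k`, together with the singletons
`[C, C]` for the sets of size `≥ k + 1` outside the image of `φ`, partition the sets of size `≥ k`.
-/

open Finset
open scoped FinsetFamily

namespace Finset

variable {α : Type*} [DecidableEq α] [Fintype α]

theorem card_mul_le_card_upShadow_mul {𝒜 : Finset (Finset α)} {r : ℕ}
    (h𝒜 : (𝒜 : Set (Finset α)).Sized r) :
    #𝒜 * (Fintype.card α - r) ≤ #(∂⁺ 𝒜) * (r + 1) := by
  rcases le_or_gt r (Fintype.card α) with hr | hr
  · have hcompl : (𝒜ᶜˢ : Set (Finset α)).Sized (Fintype.card α - r) := by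
      intro s hs
      rw [mem_coe, mem_compls] at hs
      rw [← compl_compl s, card_compl, h𝒜 hs]
    have := local_lubell_yamamoto_meshalkin_inequality_mul hcompl
    rwa [card_compls, shadow_compls, card_compls, Nat.sub_sub_self hr] at this
  · simp [Nat.sub_eq_zero_of_le hr.le]

theorem card_le_card_upShadow {𝒜 : Finset (Finset α)} {r : ℕ}
    (h𝒜 : (𝒜 : Set (Finset α)).Sized r) (hr : 2 * r + 1 ≤ Fintype.card α) :
    #𝒜 ≤ #(∂⁺ 𝒜) := by
  refine Nat.le_of_mul_le_mul_right ?_ (by omega : 0 < Fintype.card α - r)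
  calc #𝒜 * (Fintype.card α - r) ≤ #(∂⁺ 𝒜) * (r + 1) := card_mul_le_card_upShadow_mul h𝒜
    _ ≤ #(∂⁺ 𝒜) * (Fintype.card α - r) := Nat.mul_le_mul_left _ (by omega)

end Finset

section Matching

variable {α : Type*} {k : ℕ} {φ : Finset α → Finset α}

def MapsToCovers (k : ℕ) (φ : Finset α → Finset α) : Prop :=
  ∀ A : Finset α, #A = k → A ⊆ φ A ∧ #(φ A) = k + 1

theorem exists_mapsToCovers_injOn [DecidableEq α] [Fintype α] (hk : 2 * k + 1 ≤ Fintype.card α) :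
    ∃ φ : Finset α → Finset α, Set.InjOn φ {A | #A = k} ∧ MapsToCovers k φ := by
  let t : {A : Finset α // #A = k} → Finset (Finset α) := fun A => ∂⁺ {A.1}
  have hall : ∀ s, #s ≤ #(s.biUnion t) := by
    intro s
    have hsized : ((s.map (Function.Embedding.subtype _) : Finset (Finset α)) :
        Set (Finset α)).Sized k := by
      intro A hA
      obtain ⟨A, -, rfl⟩ := mem_map.1 hA
      exact A.2
    have hsub : ∂⁺ (s.map (Function.Embedding.subtype _)) ⊆ s.biUnion t := by
      intro B hB
      obtain ⟨_, hA, a, ha, rfl⟩ := mem_upShadow_iff.1 hB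
      obtain ⟨A, hAs, rfl⟩ := mem_map.1 hA
      exact mem_biUnion.2 ⟨A, hAs, insert_mem_upShadow (mem_singleton_self _) ha⟩
    calc #s = #(s.map (Function.Embedding.subtype _)) := (card_map _).symm
      _ ≤ #(∂⁺ (s.map (Function.Embedding.subtype _))) := card_le_card_upShadow hsized hk
      _ ≤ #(s.biUnion t) := card_le_card hsub
  obtain ⟨f, hf, hft⟩ := (all_card_le_biUnion_card_iff_exists_injective t).1 hall
  have hcover : ∀ A, A.1 ⊆ f A ∧ #(f A) = k + 1 := by
    intro A
    obtain ⟨_, hA, a, ha, hfA⟩ := mem_upShadow_iff.1 (hft A)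
    obtain rfl := mem_singleton.1 hA
    rw [← hfA, card_insert_of_notMem ha, A.2]
    exact ⟨subset_insert _ _, rfl⟩
  refine ⟨fun A => if h : #A = k then f ⟨A, h⟩ else A, ?_, fun A hA => ?_⟩
  · intro A (hA : #A = k) B (hB : #B = k) hAB
    exact congrArg Subtype.val (hf (by simpa [hA, hB] using hAB))
  · simpa [hA] using hcover ⟨A, hA⟩

lemma MapsToCovers.eq_or_eq (hφ : MapsToCovers k φ) {A C : Finset α} (hA : #A = k)
    (hAC : A ⊆ C) (hCφ : C ⊆ φ A) : (C = A ∧ #C = k) ∨ (C = φ A ∧ #C = k + 1) := by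
  obtain ⟨-, hφA⟩ := hφ A hA
  rcases (card_le_card hAC).eq_or_lt with h | h
  · exact .inl ⟨(eq_of_subset_of_card_le hAC h.ge).symm, h ▸ hA⟩
  · have hC : C = φ A := eq_of_subset_of_card_le hCφ (by omega)
    exact .inr ⟨hC, hC ▸ hφA⟩

def matchingIntervals (k : ℕ) (φ : Finset α → Finset α) : Set (Finset α × Finset α) :=
  (fun A => (A, φ A)) '' {A | #A = k} ∪
    (fun C => (C, C)) '' {C | k + 1 ≤ #C ∧ C ∉ φ '' {A | #A = k}}

lemma MapsToCovers.bounds_of_mem_matchingIntervals (hφ : MapsToCovers k φ)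
    {p : Finset α × Finset α} (hp : p ∈ matchingIntervals k φ) :
    p.1 ⊆ p.2 ∧ k ≤ #p.1 ∧ k + 1 ≤ #p.2 := by
  rcases hp with ⟨A, hA, rfl⟩ | ⟨C, ⟨hC, -⟩, rfl⟩
  · exact ⟨(hφ A hA).1, hA.ge, (hφ A hA).2.ge⟩
  · exact ⟨subset_rfl, Nat.le_of_succ_le hC, hC⟩

lemma MapsToCovers.exists_mem_matchingIntervals (hφ : MapsToCovers k φ) {C : Finset α}
    (hC : k ≤ #C) : ∃ p ∈ matchingIntervals k φ, p.1 ⊆ C ∧ C ⊆ p.2 := by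
  by_cases hCk : #C = k
  · exact ⟨(C, φ C), .inl ⟨C, hCk, rfl⟩, subset_rfl, (hφ C hCk).1⟩
  by_cases hCφ : C ∈ φ '' {A | #A = k}
  · obtain ⟨A, hA, rfl⟩ := hCφ
    exact ⟨(A, φ A), .inl ⟨A, hA, rfl⟩, (hφ A hA).1, subset_rfl⟩
  · exact ⟨(C, C), .inr ⟨C, ⟨by omega, hCφ⟩, rfl⟩, subset_rfl, subset_rfl⟩

lemma MapsToCovers.eq_of_mem_matchingIntervals (hφ : MapsToCovers k φ)
    (hinj : Set.InjOn φ {A | #A = k}) {p q : Finset α × Finset α}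
    (hp : p ∈ matchingIntervals k φ) (hq : q ∈ matchingIntervals k φ) {C : Finset α}
    (hpC : p.1 ⊆ C ∧ C ⊆ p.2) (hqC : q.1 ⊆ C ∧ C ⊆ q.2) : p = q := by
  rcases hp with ⟨A, hA, rfl⟩ | ⟨D, ⟨hD, hDφ⟩, rfl⟩ <;>
    rcases hq with ⟨A', hA', rfl⟩ | ⟨D', ⟨hD', hDφ'⟩, rfl⟩ <;> dsimp only at hpC hqC ⊢
  · rcases hφ.eq_or_eq hA hpC.1 hpC.2 with ⟨hCA, hC⟩ | ⟨hCA, hC⟩ <;>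
      rcases hφ.eq_or_eq hA' hqC.1 hqC.2 with ⟨hCA', hC'⟩ | ⟨hCA', hC'⟩
    · rw [← hCA, ← hCA']
    · omega
    · omega
    · rw [hinj hA hA' (hCA.symm.trans hCA')]
  · obtain rfl : C = D' := hqC.2.antisymm hqC.1
    rcases hφ.eq_or_eq hA hpC.1 hpC.2 with ⟨-, hC⟩ | ⟨hCA, -⟩
    · omega
    · exact absurd ⟨A, hA, hCA.symm⟩ hDφ'
  · obtain rfl : C = D := hpC.2.antisymm hpC.1
    rcases hφ.eq_or_eq hA' hqC.1 hqC.2 with ⟨-, hC⟩ | ⟨hCA, -⟩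
    · omega
    · exact absurd ⟨A', hA', hCA.symm⟩ hDφ
  · rw [← hpC.2.antisymm hpC.1, ← hqC.2.antisymm hqC.1]

theorem MapsToCovers.exists_interval_partition (hφ : MapsToCovers k φ)
    (hinj : Set.InjOn φ {A | #A = k}) :
    ∃ P : Set (Finset α × Finset α),
      (∀ p ∈ P, p.1 ⊆ p.2 ∧ k ≤ #p.1 ∧ k + 1 ≤ #p.2) ∧
      ∀ C : Finset α, k ≤ #C → ∃! p, p ∈ P ∧ p.1 ⊆ C ∧ C ⊆ p.2 := by
  refine ⟨matchingIntervals k φ, fun p => hφ.bounds_of_mem_matchingIntervals, fun C hC => ?_⟩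
  obtain ⟨p, hp, hpC⟩ := hφ.exists_mem_matchingIntervals hC
  exact ⟨p, ⟨hp, hpC⟩, fun q ⟨hq, hqC⟩ => hφ.eq_of_mem_matchingIntervals hinj hq hp hqC hpC⟩

end Matching

theorem partition_c_eq_two_general (d : ℕ) (n : ℕ) (hn : n = 2 * d + 1) :
    (∃ P : Set (Finset (Fin n) × Finset (Fin n)),
        (∀ p ∈ P, p.1 ⊆ p.2 ∧ d ≤ p.1.card ∧ d + 1 ≤ p.2.card) ∧
        (∀ C : Finset (Fin n), d ≤ C.card → ∃! p, p ∈ P ∧ p.1 ⊆ C ∧ C ⊆ p.2)) ∧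
    (∃ φ : Finset (Fin n) → Finset (Fin n),
        Set.InjOn φ {A : Finset (Fin n) | A.card = d} ∧
        ∀ A : Finset (Fin n), A.card = d → A ⊆ φ A ∧ (φ A).card = d + 1) := by
  obtain ⟨φ, hinj, hφ⟩ := exists_mapsToCovers_injOn (α := Fin n) (k := d) (by simp [hn])
  exact ⟨hφ.exists_interval_partition hinj, φ, hinj, hφ⟩

/-- Let `d ≥ 1` and `n = 2d+1`. Then the family of all subsets of `[n]` of
cardinality at least `d` can be partitioned into intervals `[A,B] = {C : A ⊆ C ⊆ B}` with
`|B| ≥ d+1` for every interval; in particular there is an injection from the `d`-subsets of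
`[n]` to the `(d+1)`-subsets sending each `d`-set to a `(d+1)`-set containing it. -/
theorem partition_c_eq_two (d : ℕ) (hd : 0 < d) (n : ℕ) (hn : n = 2 * d + 1) :
    (∃ P : Set (Finset (Fin n) × Finset (Fin n)),
        (∀ p ∈ P, p.1 ⊆ p.2 ∧ d ≤ p.1.card ∧ d + 1 ≤ p.2.card) ∧
        (∀ C : Finset (Fin n), d ≤ C.card → ∃! p, p ∈ P ∧ p.1 ⊆ C ∧ C ⊆ p.2)) ∧
    (∃ φ : Finset (Fin n) → Finset (Fin n),
        Set.InjOn φ {A : Finset (Fin n) | A.card = d} ∧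
        ∀ A : Finset (Fin n), A.card = d → A ⊆ φ A ∧ (φ A).card = d + 1) :=
  partition_c_eq_two_general d n hn
end

section
/- Let c and d be positive integers and let n = cd + c − 1. If A ⊆ [n] is a d-set, then the interval [A, f_c(A)] contains exactly c − 1 subsets of [n] of cardinality d+1. -/
open Fin.NatCast

/-!
A set of size `d + 1` in `[A, f_c(A)]` is `A` together with one point of `f_c(A) \ A = 𝒢_c(A)`,
so the count is `|𝒢_c(A)|`. Since the density `c` is an integer, the two bounds of (iii) force
`|Bᵢ| = c·|A ∩ Bᵢ|`; as every point of `A` lies in a block, the blocks cover exactly `cd` points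
and the gaps the remaining `n - cd = c - 1`.
-/

section Interval

variable {n : ℕ} {A B C : Finset (Fin n)}

theorem mem_fInterval : C ∈ fInterval A B ↔ A ⊆ C ∧ C ⊆ B := by
  rw [fInterval, Finset.mem_filter, Finset.mem_powerset, and_comm]

theorem card_filter_fInterval_card_add (hAB : A ⊆ B) (k : ℕ) :
    ((fInterval A B).filter (fun C => C.card = A.card + k)).card = (B \ A).card.choose k := by
  rw [← Finset.card_powersetCard]
  refine Finset.card_bij' (fun C _ => C \ A) (fun D _ => A ∪ D) ?_ ?_ ?_ ?_
  · intro C hC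
    rw [Finset.mem_filter, mem_fInterval] at hC
    obtain ⟨⟨hAC, hCB⟩, hcard⟩ := hC
    rw [Finset.mem_powersetCard, Finset.card_sdiff_of_subset hAC]
    exact ⟨Finset.sdiff_subset_sdiff hCB le_rfl, by omega⟩
  · intro D hD
    rw [Finset.mem_powersetCard] at hD
    have hdisj : Disjoint A D := Finset.disjoint_of_subset_right hD.1 Finset.disjoint_sdiff
    rw [Finset.mem_filter, mem_fInterval, Finset.card_union_of_disjoint hdisj, hD.2]
    exact ⟨⟨Finset.subset_union_left, Finset.union_subset hAB (hD.1.trans Finset.sdiff_subset)⟩,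
      rfl⟩
  · intro C hC
    exact Finset.union_sdiff_of_subset (mem_fInterval.1 (Finset.mem_filter.1 hC).1).1
  · intro D hD
    exact Finset.union_sdiff_cancel_left
      (Finset.disjoint_of_subset_right (Finset.mem_powersetCard.1 hD).1 Finset.disjoint_sdiff)

end Interval

namespace BlockStructure

variable {n : ℕ} [NeZero n] {A : Finset (Fin n)}

section

variable {δ : ℝ} (P : BlockStructure n δ A)

def blocksUnion : Finset (Fin n) :=
  Finset.univ.biUnion P.block

theorem pairwiseDisjoint_block :
    ((Finset.univ : Finset (Fin P.k)) : Set (Fin P.k)).PairwiseDisjoint P.block :=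
  fun i _ j _ hij => P.block_disj i j hij

theorem disjoint_gapsUnion : Disjoint P.gapsUnion A :=
  (Finset.disjoint_biUnion_left _ _ _).2 fun i _ => P.gap_inter i

theorem subset_fset : A ⊆ P.fset :=
  Finset.subset_union_left

theorem fset_sdiff : P.fset \ A = P.gapsUnion := by
  rw [fset, Finset.union_sdiff_left, Finset.sdiff_eq_self_of_disjoint P.disjoint_gapsUnion]

theorem disjoint_blocksUnion_gapsUnion : Disjoint P.blocksUnion P.gapsUnion :=
  (Finset.disjoint_biUnion_left _ _ _).2 fun i _ =>
    (Finset.disjoint_biUnion_right _ _ _).2 fun j _ => P.block_gap_disj i j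

theorem card_blocksUnion_add_card_gapsUnion : P.blocksUnion.card + P.gapsUnion.card = n := by
  have hcover : P.blocksUnion ∪ P.gapsUnion = Finset.univ := by
    refine Finset.eq_univ_of_forall fun x => ?_
    rcases P.cover x with ⟨i, hi⟩ | ⟨i, hi⟩
    · exact Finset.mem_union_left _ (Finset.mem_biUnion.2 ⟨i, Finset.mem_univ i, hi⟩)
    · exact Finset.mem_union_right _ (Finset.mem_biUnion.2 ⟨i, Finset.mem_univ i, hi⟩)
  rw [← Finset.card_union_of_disjoint P.disjoint_blocksUnion_gapsUnion, hcover,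
    Finset.card_univ, Fintype.card_fin]

theorem subset_blocksUnion : A ⊆ P.blocksUnion := by
  intro x hx
  rcases P.cover x with ⟨i, hi⟩ | ⟨i, hi⟩
  · exact Finset.mem_biUnion.2 ⟨i, Finset.mem_univ i, hi⟩
  · exact absurd hx (Finset.disjoint_left.1 (P.gap_inter i) hi)

theorem card_eq_sum_card_inter_block : A.card = ∑ i, (A ∩ P.block i).card := by
  conv_lhs => rw [← Finset.inter_eq_left.2 P.subset_blocksUnion, blocksUnion,
    Finset.inter_biUnion]
  exact Finset.card_biUnion (P.pairwiseDisjoint_block.mono_on fun _ _ => Finset.inter_subset_right)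

end

section

variable {c : ℕ} (P : BlockStructure n c A)

theorem card_block_s5 (i : Fin P.k) : (P.block i).card = c * (A ∩ P.block i).card := by
  have hlb : (c : ℝ) * (A ∩ P.block i).card < (P.block i).card + 1 := by
    linarith [show (c : ℝ) * (A ∩ P.block i).card - 1 < (P.block i).card from P.density_lb i]
  have hub : ((P.block i).card : ℝ) ≤ c * (A ∩ P.block i).card := P.density_ub i
  have hlb' : c * (A ∩ P.block i).card < (P.block i).card + 1 := by exact_mod_cast hlb
  have hub' : (P.block i).card ≤ c * (A ∩ P.block i).card := by exact_mod_cast hub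
  omega

theorem card_blocksUnion : P.blocksUnion.card = c * A.card := by
  rw [blocksUnion, Finset.card_biUnion P.pairwiseDisjoint_block, P.card_eq_sum_card_inter_block,
    Finset.mul_sum]
  exact Finset.sum_congr rfl fun i _ => P.card_block_s5 i

theorem card_gapsUnion : P.gapsUnion.card = n - c * A.card := by
  have := P.card_blocksUnion_add_card_gapsUnion
  rw [card_blocksUnion] at this
  omega

end

end BlockStructure

theorem interval_card_d_add_one_general (c d n : ℕ)
    (hn : n = c * d + c - 1) [NeZero n]
    (A : Finset (Fin n)) (hA : A.card = d) (P : BlockStructure n (c : ℝ) A) :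
    ((fInterval A P.fset).filter (fun C => C.card = d + 1)).card = c - 1 := by
  have hcount := card_filter_fInterval_card_add P.subset_fset 1
  rw [Nat.choose_one_right, P.fset_sdiff, P.card_gapsUnion, hA] at hcount
  rw [hcount]
  omega

/-- Let `c, d` be positive integers and `n = cd + c − 1`. If `A ⊆ [n]` is a
`d`-set, then the interval `[A, f_c(A)]` contains exactly `c − 1` subsets of `[n]` of
cardinality `d + 1`. -/
theorem interval_card_d_add_one (c d n : ℕ) (hc : 0 < c) (hd : 0 < d)
    (hn : n = c * d + c - 1) [NeZero n]
    (A : Finset (Fin n)) (hA : A.card = d) (P : BlockStructure n (c : ℝ) A) :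
    ((fInterval A P.fset).filter (fun C => C.card = d + 1)).card = c - 1 :=
  interval_card_d_add_one_general c d n hn A hA P
end

section
/- Let d be a positive integer and let n = 3d + 2. Then there exists a partition of the family of all subsets of [n] of cardinality at least d into intervals [A,B] such that |B| ≥ d+2 for every interval in the partition. -/
/-!
Read a set `S ⊆ [n]` cyclically as a walk with a step `-2` on each element of `S` and `+1`
elsewhere; call a position good when every nonempty stretch of at most one period starting there
has positive sum. For `n = 3d + 2` a `d`-set `A` has walk sum `2` over a period, so by the cycle
lemma it has exactly two good positions `g(A)`, none of them in `A`. The partition consists of the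
intervals `[A, A ∪ g(A)]` for `|A| = d` and singletons `[C, C]` for the remaining sets of size at
least `d + 2`. A `(d+1)`-set `C` has period sum `-1`, and exactly one `y ∈ C` is good for
`C \ {y}`: removing `y` turns a down-step into an up-step, and this works exactly for the `y`
just before the unique place from which the walk of `C` never drops below its starting value
within a period. Finally `A ↦ A ∪ g(A)` is injective: two preimages sharing a good position
contradict the uniqueness for `(d+1)`-sets, and two preimages with disjoint good pairs force two
descents of the walk of `A ∪ g(A)` by exactly `2` to cross, which the `-2` steps forbid.
-/

open Finset

theorem exists_last_minimizer {β : Type*} [LinearOrder β] (f : ℕ → β) {a b : ℕ} (hab : a < b) :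
    ∃ q, a ≤ q ∧ q < b ∧ (∀ t, a ≤ t → t < b → f q ≤ f t) ∧ ∀ t, q < t → t < b → f q < f t := by
  induction b, hab using Nat.le_induction with
  | base => exact ⟨a, le_rfl, by omega, fun t h₁ h₂ => by rw [show t = a by omega],
      fun t h₁ h₂ => by omega⟩
  | succ b hab ih =>
    obtain ⟨q, haq, hqb, hmin, hlast⟩ := ih
    by_cases hb : f b ≤ f q
    · refine ⟨b, by omega, by omega, fun t h₁ h₂ => ?_, fun t h₁ h₂ => by omega⟩
      rcases Nat.lt_or_ge t b with h | h
      · exact hb.trans (hmin t h₁ h)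
      · rw [show t = b by omega]
    · refine ⟨q, haq, by omega, fun t h₁ h₂ => ?_, fun t h₁ h₂ => ?_⟩
      · rcases Nat.lt_or_ge t b with h | h
        · exact hmin t h₁ h
        · rw [show t = b by omega]; exact (not_le.mp hb).le
      · rcases Nat.lt_or_ge t b with h | h
        · exact hlast t h₁ h
        · rw [show t = b by omega]; exact not_le.mp hb

theorem exists_first_minimizer {β : Type*} [LinearOrder β] (f : ℕ → β) {a b : ℕ} (hab : a < b) :
    ∃ q, a ≤ q ∧ q < b ∧ (∀ t, a ≤ t → t < b → f q ≤ f t) ∧ ∀ t, a ≤ t → t < q → f q < f t := by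
  induction b, hab using Nat.le_induction with
  | base => exact ⟨a, le_rfl, by omega, fun t h₁ h₂ => by rw [show t = a by omega],
      fun t h₁ h₂ => by omega⟩
  | succ b hab ih =>
    obtain ⟨q, haq, hqb, hmin, hfirst⟩ := ih
    by_cases hb : f b < f q
    · refine ⟨b, by omega, by omega, fun t h₁ h₂ => ?_, fun t h₁ h₂ => ?_⟩
      · rcases Nat.lt_or_ge t b with h | h
        · exact hb.le.trans (hmin t h₁ h)
        · rw [show t = b by omega]
      · exact hb.trans_le (hmin t h₁ h₂)
    · refine ⟨q, haq, by omega, fun t h₁ h₂ => ?_, hfirst⟩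
      rcases Nat.lt_or_ge t b with h | h
      · exact hmin t h₁ h
      · rw [show t = b by omega]; exact not_lt.mp hb

section IntervalPartition

variable {α : Type*} [DecidableEq α] {d : ℕ} {g : Finset α → Finset α}

variable (d g) in
def layeredIntervals : Set (Finset α × Finset α) :=
  {p | ∃ A, #A = d ∧ p = (A, A ∪ g A)} ∪
    {p | ∃ C, d + 2 ≤ #C ∧ (∀ A, #A = d → A ∪ g A ≠ C) ∧ p = (C, C)}

theorem eq_of_mem_layeredIntervals_of_card_le {p : Finset α × Finset α}
    (hp : p ∈ layeredIntervals d g) {C : Finset α} (hpC : p.1 ⊆ C) (hC : #C ≤ d + 1) :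
    ∃ A, #A = d ∧ p = (A, A ∪ g A) := by
  refine hp.resolve_right ?_
  rintro ⟨B, hB, -, rfl⟩
  have := card_le_card hpC
  dsimp only at this
  omega

theorem existsUnique_of_card_eq {C : Finset α} (hC : #C = d) :
    ∃! p, p ∈ layeredIntervals d g ∧ p.1 ⊆ C ∧ C ⊆ p.2 := by
  refine ⟨(C, C ∪ g C), ⟨Or.inl ⟨C, hC, rfl⟩, subset_rfl, subset_union_left⟩, ?_⟩
  rintro p ⟨hp, hpC, -⟩
  obtain ⟨A, hA, rfl⟩ := eq_of_mem_layeredIntervals_of_card_le hp hpC (by omega)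
  dsimp only at hpC
  obtain rfl := eq_of_subset_of_card_le hpC (by omega)
  rfl

theorem existsUnique_of_card_eq_add_one
    (hclaim : ∀ C : Finset α, #C = d + 1 → ∃! y, y ∈ C ∧ y ∈ g (C.erase y)) {C : Finset α}
    (hC : #C = d + 1) : ∃! p, p ∈ layeredIntervals d g ∧ p.1 ⊆ C ∧ C ⊆ p.2 := by
  obtain ⟨y, ⟨hy, hyg⟩, huniq⟩ := hclaim C hC
  refine ⟨(C.erase y, C.erase y ∪ g (C.erase y)), ⟨Or.inl ⟨C.erase y, by simp [hy, hC], rfl⟩,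
    erase_subset y C, fun x hx => ?_⟩, ?_⟩
  · rcases eq_or_ne x y with rfl | hxy
    exacts [mem_union_right _ hyg, mem_union_left _ (mem_erase.mpr ⟨hxy, hx⟩)]
  rintro p ⟨hp, hpC, hCp⟩
  obtain ⟨A, hA, rfl⟩ := eq_of_mem_layeredIntervals_of_card_le hp hpC hC.le
  dsimp only at hpC hCp
  obtain ⟨y', hy'C, hy'A⟩ := exists_of_ssubset (ssubset_of_subset_of_ne hpC (by rintro rfl; omega))
  obtain rfl : A = C.erase y' :=
    eq_of_subset_of_card_le (subset_erase.mpr ⟨hpC, hy'A⟩) (by rw [card_erase_of_mem hy'C]; omega)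
  rw [huniq y' ⟨hy'C, (mem_union.mp (hCp hy'C)).resolve_left hy'A⟩]

theorem existsUnique_of_add_two_le_card (hdisj : ∀ A : Finset α, #A = d → Disjoint A (g A))
    (hcard : ∀ A : Finset α, #A = d → #(g A) = 2)
    (hinj : ∀ A A' : Finset α, #A = d → #A' = d → A ∪ g A = A' ∪ g A' → A = A')
    {C : Finset α} (hC : d + 2 ≤ #C) : ∃! p, p ∈ layeredIntervals d g ∧ p.1 ⊆ C ∧ C ⊆ p.2 := by
  have htop : ∀ A, #A = d → C ⊆ A ∪ g A → A ∪ g A = C := by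
    intro A hA hCA
    refine (eq_of_subset_of_card_le hCA ?_).symm
    rw [card_union_of_disjoint (hdisj A hA), hcard A hA]
    omega
  by_cases himage : ∃ A, #A = d ∧ A ∪ g A = C
  · obtain ⟨A₀, hA₀, rfl⟩ := himage
    refine ⟨(A₀, A₀ ∪ g A₀), ⟨Or.inl ⟨A₀, hA₀, rfl⟩, subset_union_left, subset_rfl⟩, ?_⟩
    rintro p ⟨⟨A, hA, rfl⟩ | ⟨B, -, hnot, rfl⟩, hpC, hCp⟩ <;> dsimp only at hpC hCp
    · rw [hinj A A₀ hA hA₀ (htop A hA hCp)]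
    · exact (hnot A₀ hA₀ (subset_antisymm hCp hpC)).elim
  · push Not at himage
    refine ⟨(C, C), ⟨Or.inr ⟨C, hC, himage, rfl⟩, subset_rfl, subset_rfl⟩, ?_⟩
    rintro p ⟨⟨A, hA, rfl⟩ | ⟨B, -, -, rfl⟩, hpC, hCp⟩ <;> dsimp only at hpC hCp
    · exact (himage A hA (htop A hA hCp)).elim
    · rw [subset_antisymm hpC hCp]

theorem exists_partition_layeredIntervals (hdisj : ∀ A : Finset α, #A = d → Disjoint A (g A))
    (hcard : ∀ A : Finset α, #A = d → #(g A) = 2)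
    (hinj : ∀ A A' : Finset α, #A = d → #A' = d → A ∪ g A = A' ∪ g A' → A = A')
    (hclaim : ∀ C : Finset α, #C = d + 1 → ∃! y, y ∈ C ∧ y ∈ g (C.erase y)) :
    ∃ P : Set (Finset α × Finset α),
      (∀ p ∈ P, p.1 ⊆ p.2 ∧ d ≤ #p.1 ∧ d + 2 ≤ #p.2) ∧
      (∀ C : Finset α, d ≤ #C → ∃! p, p ∈ P ∧ p.1 ⊆ C ∧ C ⊆ p.2) := by
  refine ⟨layeredIntervals d g, ?_, fun C hC => ?_⟩
  · rintro p (⟨A, hA, rfl⟩ | ⟨C, hC, -, rfl⟩)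
    · refine ⟨subset_union_left, hA.ge, ?_⟩
      rw [card_union_of_disjoint (hdisj A hA), hcard A hA, hA]
    · exact ⟨subset_rfl, by dsimp only; omega, hC⟩
  rcases Nat.lt_trichotomy #C (d + 1) with h | h | h
  · exact existsUnique_of_card_eq (by omega)
  · exact existsUnique_of_card_eq_add_one hclaim h
  · exact existsUnique_of_add_two_le_card hdisj hcard hinj h

end IntervalPartition

namespace CycleLemma

open Fin.NatCast

section Residues

variable {n : ℕ} [NeZero n]

theorem natCast_add_self (t : ℕ) : ((t + n : ℕ) : Fin n) = t := by
  simp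

theorem eq_of_natCast_eq {s t : ℕ} (h : (s : Fin n) = t) (hst : s ≤ t) (hts : t < s + n) :
    s = t := by
  have hmod : s % n = t % n := by simpa [Fin.ext_iff, Fin.val_natCast] using h
  obtain ⟨k, hk⟩ := (Nat.modEq_iff_dvd' hst).mp hmod
  have : n * k < n := by omega
  rcases k with _ | k
  · omega
  · nlinarith

theorem natCast_ne_of_lt {s t : ℕ} (hst : s < t) (hts : t < s + n) : (s : Fin n) ≠ t :=
  fun h => hst.ne (eq_of_natCast_eq h hst.le hts)

theorem exists_natCast_eq (x : Fin n) (p : ℕ) : ∃ t, p < t ∧ t ≤ p + n ∧ (t : Fin n) = x := by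
  induction p with
  | zero =>
    rcases Nat.eq_zero_or_pos x.val with hx | hx
    · exact ⟨n, Nat.pos_of_neZero n, by omega, by rw [Fin.natCast_self]; exact Fin.ext hx.symm⟩
    · exact ⟨x.val, hx, by omega, Fin.cast_val_eq_self x⟩
  | succ p ih =>
    obtain ⟨t, hpt, htp, hx⟩ := ih
    rcases Nat.lt_or_ge (p + 1) t with hpt | hpt
    · exact ⟨t, hpt, by omega, hx⟩
    · obtain rfl : t = p + 1 := by omega
      exact ⟨p + 1 + n, by have := Nat.pos_of_neZero n; omega, le_rfl, by rw [natCast_add_self, hx]⟩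

theorem exists_natCast_eq_of_ne {x : Fin n} {p : ℕ} (hx : x ≠ p) :
    ∃ t, p < t ∧ t < p + n ∧ (t : Fin n) = x := by
  obtain ⟨t, hpt, htp, rfl⟩ := exists_natCast_eq x p
  refine ⟨t, hpt, lt_of_le_of_ne htp ?_, rfl⟩
  rintro rfl
  exact hx (natCast_add_self p)

end Residues

section Walk

variable {n : ℕ} [NeZero n]

def step (S : Finset (Fin n)) (t : ℕ) : ℤ := if (t : Fin n) ∈ S then -2 else 1

def walk (S : Finset (Fin n)) (t : ℕ) : ℤ := ∑ s ∈ range t, step S s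

def IsGood (S : Finset (Fin n)) (q : ℕ) : Prop :=
  ∀ t, q < t → t ≤ q + n → walk S q < walk S t

open Classical in
noncomputable def goodSet (S : Finset (Fin n)) : Finset (Fin n) :=
  univ.filter fun x => IsGood S x

variable {S : Finset (Fin n)}

theorem step_of_mem {t : ℕ} (h : (t : Fin n) ∈ S) : step S t = -2 := if_pos h

theorem step_of_notMem {t : ℕ} (h : (t : Fin n) ∉ S) : step S t = 1 := if_neg h

theorem step_le_one (t : ℕ) : step S t ≤ 1 := by
  unfold step; split <;> norm_num

theorem step_add_period (t : ℕ) : step S (t + n) = step S t := by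
  simp only [step, natCast_add_self]

theorem walk_succ (t : ℕ) : walk S (t + 1) = walk S t + step S t := sum_range_succ _ _

theorem walk_succ_of_mem {t : ℕ} (h : (t : Fin n) ∈ S) : walk S (t + 1) = walk S t - 2 := by
  rw [walk_succ, step_of_mem h]; ring

theorem walk_add_period (t : ℕ) : walk S (t + n) = walk S t + (n - 3 * #S) := by
  induction t with
  | zero =>
    have hstep : ∀ x : Fin n, step S x = 1 - 3 * if x ∈ S then 1 else 0 := by
      intro x; simp only [step, Fin.cast_val_eq_self]; split <;> norm_num
    simp only [walk, zero_add, sum_range, hstep]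
    simp [sum_ite_mem, mul_comm]
  | succ t ih =>
    rw [show t + 1 + n = t + n + 1 by omega, walk_succ, walk_succ, ih, step_add_period]
    ring

theorem isGood_add_period_iff {q : ℕ} : IsGood S (q + n) ↔ IsGood S q := by
  have hper := walk_add_period (S := S)
  constructor
  · intro h t hqt htq
    have := h (t + n) (by omega) (by omega)
    rw [hper, hper] at this
    omega
  · intro h t hqt htq
    have := h (t - n) (by omega) (by omega)
    have ht := hper (t - n)
    rw [Nat.sub_add_cancel (by omega)] at ht
    rw [hper]
    omega

theorem isGood_mod_iff {q : ℕ} : IsGood S (q % n) ↔ IsGood S q := by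
  conv_rhs => rw [← Nat.mod_add_div q n]
  induction q / n with
  | zero => simp
  | succ k ih => rw [mul_add_one, ← add_assoc, isGood_add_period_iff, ih]

theorem mem_goodSet {q : ℕ} : (q : Fin n) ∈ goodSet S ↔ IsGood S q := by
  simp [goodSet, isGood_mod_iff]

theorem mem_goodSet_iff {x : Fin n} : x ∈ goodSet S ↔ IsGood S x := by
  rw [← mem_goodSet, Fin.cast_val_eq_self]

theorem notMem_of_isGood {q : ℕ} (h : IsGood S q) : (q : Fin n) ∉ S := by
  intro hq
  have := h (q + 1) (by omega) (by have := Nat.pos_of_neZero n; omega)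
  rw [walk_succ, step_of_mem hq] at this
  omega

theorem disjoint_goodSet (S : Finset (Fin n)) : Disjoint S (goodSet S) := by
  rw [disjoint_right]
  intro x hx
  simpa using notMem_of_isGood (mem_goodSet_iff.mp hx)

theorem exists_isGood_of_mem_goodSet {x : Fin n} (hx : x ∈ goodSet S) {p : ℕ} (hxp : x ≠ p) :
    ∃ t, p < t ∧ t < p + n ∧ IsGood S t := by
  obtain ⟨t, h₁, h₂, rfl⟩ := exists_natCast_eq_of_ne hxp
  exact ⟨t, h₁, h₂, mem_goodSet.mp hx⟩

theorem walk_union_sub {A T : Finset (Fin n)} (hAT : Disjoint A T) {q t : ℕ}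
    (hq : (q : Fin n) ∈ T) (hT : ∀ s, q < s → s < t → (s : Fin n) ∉ T) (hqt : q < t) :
    walk (A ∪ T) t - walk (A ∪ T) q = walk A t - walk A q - 3 := by
  induction t, hqt using Nat.le_induction with
  | base =>
    rw [walk_succ, walk_succ, step_of_mem (mem_union_right A hq),
      step_of_notMem (disjoint_right.mp hAT hq)]
    ring
  | succ t hqt ih =>
    have hstep : step (A ∪ T) t = step A t := by simp [step, hT t hqt (by omega)]
    have := ih fun s h₁ h₂ => hT s h₁ (by omega)
    rw [walk_succ, walk_succ, hstep]
    omega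

end Walk

section TwoGood

variable {n : ℕ} [NeZero n] {S : Finset (Fin n)} (hS : n = 3 * #S + 2)
include hS

theorem walk_add_period_of_eq_add_two (t : ℕ) : walk S (t + n) = walk S t + 2 := by
  rw [walk_add_period]; omega

theorem not_isGood_three {q₁ q₂ q₃ : ℕ} (h₁ : IsGood S q₁) (h₂ : IsGood S q₂)
    (h₃ : IsGood S q₃) (h₁₂ : q₁ < q₂) (h₂₃ : q₂ < q₃) (h₃₁ : q₃ < q₁ + n) : False := by
  have := h₁ q₂ h₁₂ (by omega)
  have := h₂ q₃ h₂₃ (by omega)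
  have := h₃ (q₁ + n) h₃₁ (by omega)
  have := walk_add_period_of_eq_add_two hS q₁
  omega

theorem isGood_of_last_minimizer {p q : ℕ} (hqp : q < p + n)
    (hmin : ∀ t, p ≤ t → t < p + n → walk S q ≤ walk S t)
    (hlast : ∀ t, q < t → t < p + n → walk S q < walk S t) : IsGood S q := by
  intro t hqt htq
  rcases Nat.lt_or_ge t (p + n) with ht | ht
  · exact hlast t hqt ht
  · have := hmin (t - n) (by omega) (by omega)
    have := walk_add_period_of_eq_add_two hS (t - n)
    rw [Nat.sub_add_cancel (by omega)] at this
    omega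

theorem card_goodSet : #(goodSet S) = 2 := by
  obtain ⟨q₁, -, hq₁n, hmin₁, hlast₁⟩ := exists_last_minimizer (walk S) (Nat.pos_of_neZero n)
  obtain ⟨q₂, hq₁₂, hq₂n, hmin₂, hlast₂⟩ :=
    exists_last_minimizer (walk S) (a := q₁ + 1) (b := q₁ + 1 + n) (by omega)
  have hgood₁ := isGood_of_last_minimizer hS (p := 0) (by omega)
    (fun t h₁ h₂ => hmin₁ t h₁ (by omega)) (fun t h₁ h₂ => hlast₁ t h₁ (by omega))
  have hgood₂ := isGood_of_last_minimizer hS hq₂n hmin₂ hlast₂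
  -- the walk rises by at most one just after `q₁` but by two over a whole period
  have hq₂ : q₂ < q₁ + n := by
    have hrise : walk S q₂ ≤ walk S q₁ + 1 := by
      have := hmin₂ (q₁ + 1) le_rfl (by omega)
      have := step_le_one (S := S) q₁
      have := walk_succ (S := S) q₁
      omega
    refine lt_of_le_of_ne (by omega) fun h => ?_
    have := walk_add_period_of_eq_add_two hS q₁
    rw [← h] at this
    omega
  refine card_eq_two.mpr ⟨q₁, q₂, natCast_ne_of_lt (by omega) hq₂, ?_⟩
  ext x
  simp only [mem_insert, mem_singleton]
  refine ⟨fun hx => ?_, ?_⟩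
  · by_contra hne
    obtain ⟨hne₁, hne₂⟩ := not_or.mp hne
    obtain ⟨t, hq₁t, htq₁, rfl⟩ := exists_natCast_eq_of_ne hne₁
    have hgood := mem_goodSet.mp hx
    rcases lt_trichotomy t q₂ with h | rfl | h
    · exact not_isGood_three hS hgood₁ hgood hgood₂ hq₁t h hq₂
    · exact hne₂ rfl
    · exact not_isGood_three hS hgood₁ hgood₂ hgood (by omega) h htq₁
  · rintro (rfl | rfl)
    exacts [mem_goodSet.mpr hgood₁, mem_goodSet.mpr hgood₂]

theorem exists_isGood_gt (q : ℕ) : ∃ r, q < r ∧ r < q + n ∧ IsGood S r := by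
  obtain ⟨x, hx, hxq⟩ := exists_mem_ne (by rw [card_goodSet hS]; omega) (q : Fin n)
  exact exists_isGood_of_mem_goodSet hx hxq

theorem exists_eq_pair_goodSet {u : Fin n} (hu : u ∈ goodSet S) :
    ∃ y, u ≠ y ∧ goodSet S = {u, y} := by
  obtain ⟨y, hy, hyu⟩ := exists_mem_ne (by rw [card_goodSet hS]; omega) u
  refine ⟨y, hyu.symm, (eq_of_subset_of_card_le ?_ ?_).symm⟩
  · exact insert_subset hu (singleton_subset_iff.mpr hy)
  · rw [card_goodSet hS, card_pair hyu.symm]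

end TwoGood

section OneClaimant

variable {n : ℕ} [NeZero n]

def IsLowStart (D : Finset (Fin n)) (u : ℕ) : Prop :=
  ∀ t, u ≤ t → t < u + n → walk D u ≤ walk D t

theorem mem_goodSet_erase_iff {D : Finset (Fin n)} {y : Fin n} (hy : y ∈ D) :
    y ∈ goodSet (D.erase y) ↔ IsLowStart D (y + 1) := by
  have hD : D.erase y ∪ {y} = D := by rw [union_singleton, insert_erase hy]
  have hsub : ∀ t : ℕ, (y : ℕ) < t → t ≤ y + n →
      walk D t - walk D y = walk (D.erase y) t - walk (D.erase y) y - 3 := by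
    intro t hyt hty
    have := walk_union_sub (disjoint_singleton_right.mpr (notMem_erase y D)) (by simp)
      (fun s h₁ h₂ => by simpa using (natCast_ne_of_lt (n := n) h₁ (by omega)).symm) hyt
    rwa [hD] at this
  have hdown : walk D (y + 1) = walk D y - 2 := walk_succ_of_mem (by simpa using hy)
  rw [mem_goodSet_iff]
  constructor
  · intro h t h₁ h₂
    have := h t (by omega) (by omega)
    have := hsub t (by omega) (by omega)
    omega
  · intro h t h₁ h₂
    have := h t (by omega) (by omega)
    have := hsub t h₁ h₂
    omega

variable {D : Finset (Fin n)} (hD : 3 * #D = n + 1)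
include hD

theorem walk_add_period_of_eq_sub_one (t : ℕ) : walk D (t + n) = walk D t - 1 := by
  rw [walk_add_period]; omega

theorem not_isLowStart_two {u v : ℕ} (hu : IsLowStart D u) (hv : IsLowStart D v) (huv : u < v)
    (hvu : v < u + n) : False := by
  have := hu v huv.le (by omega)
  have := hv (u + n) (by omega) (by omega)
  have := walk_add_period_of_eq_sub_one hD u
  omega

theorem exists_isLowStart : ∃ u, 1 ≤ u ∧ u ≤ n ∧ IsLowStart D u ∧ ((u - 1 : ℕ) : Fin n) ∈ D := by
  obtain ⟨u, hu₁, hun, hmin, hfirst⟩ :=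
    exists_first_minimizer (walk D) (a := 1) (b := n + 1) (by have := Nat.pos_of_neZero n; omega)
  have hlow : IsLowStart D u := by
    intro t hut htu
    rcases Nat.lt_or_ge n t with hnt | htn
    · have := hfirst (t - n) (by omega) (by omega)
      have := walk_add_period_of_eq_sub_one hD (t - n)
      rw [Nat.sub_add_cancel hnt.le] at this
      omega
    · exact hmin t (by omega) (by omega)
  refine ⟨u, hu₁, by omega, hlow, ?_⟩
  -- otherwise the walk rises into `u`, and `u - 1` would be a second low start
  by_contra hnot
  have hrise := walk_succ (S := D) (u - 1)
  rw [step_of_notMem hnot, Nat.sub_add_cancel hu₁] at hrise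
  refine not_isLowStart_two hD (u := u - 1) (v := u) (fun t h₁ h₂ => ?_) hlow (by omega)
    (by omega)
  rcases Nat.lt_or_ge t u with h | h
  · rw [show t = u - 1 by omega]
  · have := hlow t h (by omega)
    omega

theorem existsUnique_mem_goodSet_erase : ∃! y, y ∈ D ∧ y ∈ goodSet (D.erase y) := by
  obtain ⟨u, hu₁, hun, hlow, hmem⟩ := exists_isLowStart hD
  have hval : (((u - 1 : ℕ) : Fin n) : ℕ) = u - 1 := by
    simp [Nat.mod_eq_of_lt (by omega : u - 1 < n)]
  refine ⟨(u - 1 : ℕ), ⟨hmem, ?_⟩, ?_⟩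
  · rw [mem_goodSet_erase_iff hmem, hval, Nat.sub_add_cancel hu₁]
    exact hlow
  · rintro z ⟨hz, hzgood⟩
    rw [mem_goodSet_erase_iff hz] at hzgood
    refine Fin.ext ?_
    rw [hval]
    rcases lt_trichotomy (z : ℕ) (u - 1) with h | h | h
    · exact (not_isLowStart_two hD hzgood hlow (by omega) (by omega)).elim
    · exact h
    · exact (not_isLowStart_two hD hlow hzgood (by omega) (by omega)).elim

end OneClaimant

section Injectivity

variable {n : ℕ} [NeZero n]

def DropsByTwo (E : Finset (Fin n)) (a b : ℕ) : Prop :=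
  walk E b = walk E a - 2 ∧ ∀ t, a < t → t ≤ b → walk E a - 2 ≤ walk E t

theorem not_dropsByTwo_crossing {E : Finset (Fin n)} {a b c e : ℕ} (hab : DropsByTwo E a b)
    (hce : DropsByTwo E c e) (hac : a < c) (hcb : c < b) (hbe : b < e) (hc : (c : Fin n) ∈ E)
    (hb : (b : Fin n) ∈ E) : False := by
  have := hab.1
  have := hab.2 (c + 1) (by omega) (by omega)
  have := hce.2 (b + 1) (by omega) (by omega)
  have := walk_succ_of_mem hc
  have := walk_succ_of_mem hb
  omega

theorem mem_union_goodSet {A : Finset (Fin n)} {q : ℕ} (hq : IsGood A q) :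
    (q : Fin n) ∈ A ∪ goodSet A :=
  mem_union_right A (mem_goodSet.mpr hq)

theorem sub_two_le_walk_union_goodSet {A : Finset (Fin n)} {q r : ℕ} (hq : IsGood A q)
    (hr : r ≤ q + n) (hgap : ∀ s, q < s → s < r → ¬ IsGood A s) {t : ℕ} (hqt : q < t)
    (htr : t ≤ r) : walk (A ∪ goodSet A) q - 2 ≤ walk (A ∪ goodSet A) t := by
  have := walk_union_sub (disjoint_goodSet A) (mem_goodSet.mpr hq)
    (fun s h₁ h₂ h => hgap s h₁ (by omega) (mem_goodSet.mp h)) hqt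
  have := hq t hqt (by omega)
  omega

theorem mem_goodSet_erase_erase {A : Finset (Fin n)} {u y : Fin n} (hG : goodSet A = {u, y})
    (huy : u ≠ y) :
    y ∈ (A ∪ goodSet A).erase u ∧ y ∈ goodSet (((A ∪ goodSet A).erase u).erase y) := by
  have hu : u ∉ A := disjoint_right.mp (disjoint_goodSet A) (by simp [hG])
  have hy : y ∉ A := disjoint_right.mp (disjoint_goodSet A) (by simp [hG])
  have hA : ((A ∪ goodSet A).erase u).erase y = A := by
    ext x
    simp only [mem_erase, mem_union, hG, mem_insert, mem_singleton]
    constructor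
    · rintro ⟨hxy, hxu, hx | rfl | rfl⟩
      exacts [hx, (hxu rfl).elim, (hxy rfl).elim]
    · intro hx
      exact ⟨ne_of_mem_of_not_mem hx hy, ne_of_mem_of_not_mem hx hu, Or.inl hx⟩
  rw [hA, hG]
  simp [huy.symm]

variable {A : Finset (Fin n)} (hA : n = 3 * #A + 2)
include hA

theorem dropsByTwo_of_isGood {a b : ℕ} (ha : IsGood A a) (hb : IsGood A b) (hab : a < b)
    (hba : b < a + n) : DropsByTwo (A ∪ goodSet A) a b := by
  have hcard : #(A ∪ goodSet A) = #A + 2 := by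
    rw [card_union_of_disjoint (disjoint_goodSet A), card_goodSet hA]
  have hperiod := walk_add_period (S := A ∪ goodSet A) a
  rw [hcard] at hperiod
  have hlow : ∀ t, a < t → t ≤ b → walk (A ∪ goodSet A) a - 2 ≤ walk (A ∪ goodSet A) t :=
    fun t => sub_two_le_walk_union_goodSet ha hba.le
      fun s h₁ h₂ hs => not_isGood_three hA ha hs hb h₁ h₂ hba
  have hhigh := sub_two_le_walk_union_goodSet (t := a + n) hb (by omega)
    (fun s h₁ h₂ hs => not_isGood_three hA ha hb hs hab h₁ h₂) hba le_rfl
  have := hlow b hab le_rfl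
  push_cast at hperiod
  exact ⟨by omega, hlow⟩

theorem not_disjoint_goodSet {A' : Finset (Fin n)} (hA' : #A' = #A)
    (h : A ∪ goodSet A = A' ∪ goodSet A') : ¬ Disjoint (goodSet A) (goodSet A') := by
  intro hdisj
  have hA'' : n = 3 * #A' + 2 := by omega
  have hne : ∀ {p p' : ℕ}, IsGood A p → IsGood A' p' → p ≠ p' := fun hp hp' hpp' =>
    disjoint_iff_ne.mp hdisj _ (mem_goodSet.mpr hp) _ (mem_goodSet.mpr hp') (by rw [hpp'])
  have hE : ∀ {p : ℕ}, IsGood A' p → (p : Fin n) ∈ A ∪ goodSet A := fun hp =>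
    h ▸ mem_union_goodSet hp
  obtain ⟨x, hx⟩ : (goodSet A).Nonempty := card_pos.mp (by rw [card_goodSet hA]; omega)
  obtain ⟨x', hx'⟩ : (goodSet A').Nonempty := card_pos.mp (by rw [card_goodSet hA'']; omega)
  have ha := mem_goodSet_iff.mp hx
  obtain ⟨b, hab, hba, hb⟩ := exists_isGood_gt hA x
  have han : IsGood A (x + n) := isGood_add_period_iff.mpr ha
  obtain ⟨c, hac, hca, hc⟩ := exists_isGood_of_mem_goodSet hx' (p := x)
    (by rw [Fin.cast_val_eq_self]; exact (disjoint_iff_ne.mp hdisj x hx x' hx').symm)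
  obtain ⟨e, hce, hec, he⟩ := exists_isGood_gt hA'' c
  have hcn : IsGood A' (c + n) := isGood_add_period_iff.mpr hc
  have hab' := dropsByTwo_of_isGood hA ha hb hab hba
  have hba' := dropsByTwo_of_isGood hA hb han hba (by omega)
  have hce' := h ▸ dropsByTwo_of_isGood hA'' hc he hce hec
  have hec' := h ▸ dropsByTwo_of_isGood hA'' he hcn hec (by omega)
  -- the interval from `c` or from `e` crosses the interval `(x, b]` or `(b, x + n]`
  rcases lt_or_gt_of_ne (hne hb hc).symm with hcb | hbc
  · rcases lt_or_gt_of_ne (hne hb he).symm with heb | hbe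
    · exact not_dropsByTwo_crossing hab' hec' (by omega) heb (by omega) (hE he)
        (mem_union_goodSet hb)
    · exact not_dropsByTwo_crossing hab' hce' hac hcb hbe (hE hc) (mem_union_goodSet hb)
  · rcases lt_or_gt_of_ne (hne han he).symm with hea | hae
    · exact not_dropsByTwo_crossing hba' hec' (by omega) hea (by omega) (hE he)
        (mem_union_goodSet han)
    · exact not_dropsByTwo_crossing hba' hce' hbc (by omega) hae (hE hc) (mem_union_goodSet han)

theorem goodSet_eq_of_mem_of_mem {A' : Finset (Fin n)} (hA' : #A' = #A)
    (h : A ∪ goodSet A = A' ∪ goodSet A') {u : Fin n} (hu : u ∈ goodSet A)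
    (hu' : u ∈ goodSet A') : goodSet A = goodSet A' := by
  obtain ⟨y, huy, hG⟩ := exists_eq_pair_goodSet hA hu
  obtain ⟨y', huy', hG'⟩ := exists_eq_pair_goodSet (by omega) hu'
  have hD : 3 * #((A ∪ goodSet A).erase u) = n + 1 := by
    rw [card_erase_of_mem (mem_union_right A hu), card_union_of_disjoint (disjoint_goodSet A),
      card_goodSet hA]
    omega
  have hy := mem_goodSet_erase_erase hG huy
  have hy' := mem_goodSet_erase_erase hG' huy'
  rw [← h] at hy'
  rw [hG, hG', (existsUnique_mem_goodSet_erase hD).unique hy hy']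

theorem eq_of_union_goodSet_eq {A' : Finset (Fin n)} (hA' : #A' = #A)
    (h : A ∪ goodSet A = A' ∪ goodSet A') : A = A' := by
  obtain ⟨u, hu, hu'⟩ := not_disjoint_iff.mp (not_disjoint_goodSet hA hA' h)
  rw [← union_sdiff_cancel_right (disjoint_goodSet A), h,
    goodSet_eq_of_mem_of_mem hA hA' h hu hu', union_sdiff_cancel_right (disjoint_goodSet A')]

end Injectivity

end CycleLemma

theorem partition_c_eq_three_general (d : ℕ) (n : ℕ) (hn : n = 3 * d + 2) :
    ∃ P : Set (Finset (Fin n) × Finset (Fin n)),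
      (∀ p ∈ P, p.1 ⊆ p.2 ∧ d ≤ p.1.card ∧ d + 2 ≤ p.2.card) ∧
      (∀ C : Finset (Fin n), d ≤ C.card → ∃! p, p ∈ P ∧ p.1 ⊆ C ∧ C ⊆ p.2) := by
  have : NeZero n := ⟨by omega⟩
  exact exists_partition_layeredIntervals (g := CycleLemma.goodSet)
    (fun A _ => CycleLemma.disjoint_goodSet A)
    (fun A hA => CycleLemma.card_goodSet (by omega))
    (fun A A' hA hA' h => CycleLemma.eq_of_union_goodSet_eq (by omega) (by omega) h)
    (fun C hC => CycleLemma.existsUnique_mem_goodSet_erase (by omega))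

/-- (Theorem for `c = 3`) Let `d` be a positive integer and `n = 3d + 2`.
Then the family of all subsets of `[n]` of cardinality at least `d` can be partitioned into
intervals `[A,B] = {C : A ⊆ C ⊆ B}` with `|B| ≥ d + 2` for every interval. -/
theorem partition_c_eq_three (d : ℕ) (hd : 0 < d) (n : ℕ) (hn : n = 3 * d + 2) :
    ∃ P : Set (Finset (Fin n) × Finset (Fin n)),
      (∀ p ∈ P, p.1 ⊆ p.2 ∧ d ≤ p.1.card ∧ d + 2 ≤ p.2.card) ∧
      (∀ C : Finset (Fin n), d ≤ C.card → ∃! p, p ∈ P ∧ p.1 ⊆ C ∧ C ⊆ p.2) :=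
  partition_c_eq_three_general d n hn
end

section
/- Let n, d, k be positive integers with d ≤ k ≤ n. Suppose the family of all subsets of [n] of cardinality at least d is partitioned into intervals [C₁,D₁], …, [C_r,D_r] with |D_i| ≥ k for all i. Then C(n,d)·(k−d) ≤ C(n,d+1), where C(n,j) denotes the binomial coefficient n choose j. -/
/-!
Every `d`-set `S` lies in exactly one interval `[C, D]`, and since `|C| ≥ d` this forces `C = S`.
Hence `S` is covered by at least `|D| - d ≥ k - d` sets `S ∪ {x}`, `x ∈ D \ S`, of the same interval,
while a `(d+1)`-set `T` is covered in this way by at most one `d`-set, namely the bottom of the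
interval containing `T`. Double counting these pairs gives `C(n,d) (k - d) ≤ C(n,d+1)`.
-/

open Finset

section IntervalPartition

open Classical

variable {α ι : Type*} {C D : ι → Finset α} {d : ℕ}

def SubsetWithinInterval (C D : ι → Finset α) (S T : Finset α) : Prop :=
  ∃ i, C i ⊆ S ∧ S ⊆ T ∧ T ⊆ D i

lemma card_sdiff_le_card_bipartiteAbove [Fintype α] {S : Finset α} {i : ι} (hS : #S = d)
    (hCS : C i ⊆ S) (hSD : S ⊆ D i) :
    #(D i \ S) ≤ #((univ.powersetCard (d + 1)).bipartiteAbove (SubsetWithinInterval C D) S) := by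
  refine card_le_card_of_injOn (fun x => insert x S) (fun x hx => ?_) (fun x hx y _ hxy => ?_)
  · obtain ⟨hxD, hxS⟩ := mem_sdiff.mp hx
    rw [mem_coe, mem_bipartiteAbove, mem_powersetCard_univ, card_insert_of_notMem hxS, hS]
    exact ⟨rfl, i, hCS, subset_insert x S, insert_subset hxD hSD⟩
  · exact (insert_inj (mem_sdiff.mp hx).2).mp hxy

lemma card_bipartiteBelow_le_one [Fintype α] (hC : ∀ i, d ≤ #(C i))
    (hpart : ∀ S : Finset α, d ≤ #S → ∃! i, C i ⊆ S ∧ S ⊆ D i) {T : Finset α} (hT : d ≤ #T) :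
    #((univ.powersetCard d).bipartiteBelow (SubsetWithinInterval C D) T) ≤ 1 := by
  refine card_le_one.mpr fun S hS S' hS' => ?_
  simp only [mem_bipartiteBelow, mem_powersetCard_univ] at hS hS'
  obtain ⟨hScard, i, hCS, hST, hTD⟩ := hS
  obtain ⟨hS'card, i', hCS', hS'T, hTD'⟩ := hS'
  -- the interval containing `T` is unique, and its bottom is a `d`-set below `S` and `S'`
  have hii' : i = i' := (hpart T hT).unique ⟨hCS.trans hST, hTD⟩ ⟨hCS'.trans hS'T, hTD'⟩
  subst hii'
  rw [← eq_of_subset_of_card_le hCS (hScard ▸ hC i),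
    ← eq_of_subset_of_card_le hCS' (hS'card ▸ hC i)]

theorem choose_mul_sub_le_choose_succ_of_intervals [Fintype α] {k : ℕ}
    (hC : ∀ i, d ≤ #(C i)) (hD : ∀ i, k ≤ #(D i))
    (hpart : ∀ S : Finset α, d ≤ #S → ∃! i, C i ⊆ S ∧ S ⊆ D i) :
    (Fintype.card α).choose d * (k - d) ≤ (Fintype.card α).choose (d + 1) := by
  have h := card_mul_le_card_mul (SubsetWithinInterval C D)
    (s := univ.powersetCard d) (t := univ.powersetCard (d + 1)) (m := k - d) (n := 1)
    (fun S hS => ?_) (fun T hT => card_bipartiteBelow_le_one hC hpart ?_)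
  · simpa only [card_powersetCard, card_univ, mul_one] using h
  · rw [mem_powersetCard_univ] at hS
    obtain ⟨i, ⟨hCS, hSD⟩, -⟩ := hpart S hS.ge
    calc k - d ≤ #(D i) - #S := by have := hD i; omega
      _ ≤ #(D i \ S) := le_card_sdiff S (D i)
      _ ≤ _ := card_sdiff_le_card_bipartiteAbove hS hCS hSD
  · rw [mem_powersetCard_univ.mp hT]
    exact d.le_succ

end IntervalPartition

theorem counting_bound_general (n d k r : ℕ)
    (C D : Fin r → Finset (Fin n))
    (hC : ∀ i, d ≤ (C i).card)
    (hD : ∀ i, k ≤ (D i).card)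
    (hpart : ∀ S : Finset (Fin n), d ≤ S.card → ∃! i, C i ⊆ S ∧ S ⊆ D i) :
    n.choose d * (k - d) ≤ n.choose (d + 1) := by
  simpa only [Fintype.card_fin] using choose_mul_sub_le_choose_succ_of_intervals hC hD hpart

/-- Let `n, d, k` be positive integers with `d ≤ k ≤ n`. If the family of
all subsets of `[n]` of cardinality at least `d` is partitioned into intervals
`[C₁,D₁], …, [C_r,D_r]` with `|Dᵢ| ≥ k` for all `i`, then `C(n,d)·(k−d) ≤ C(n,d+1)`. -/
theorem counting_bound (n d k r : ℕ) (hd : 0 < d) (hdk : d ≤ k) (hkn : k ≤ n)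
    (C D : Fin r → Finset (Fin n))
    (hCD : ∀ i, C i ⊆ D i)
    (hC : ∀ i, d ≤ (C i).card)
    (hD : ∀ i, k ≤ (D i).card)
    (hpart : ∀ S : Finset (Fin n), d ≤ S.card → ∃! i, C i ⊆ S ∧ S ⊆ D i) :
    n.choose d * (k - d) ≤ n.choose (d + 1) :=
  counting_bound_general n d k r C D hC hD hpart
end
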